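/- arXiv:1402.0915 — 8 statements merged into one kernel-verified Lean document; each statement's English description precedes it below -/
import Mathlib

section
/- Let Y ∈ ℝ^{D×N} with 1 ≤ K ≤ D, and let p be a probability mass function on {1,…,K} with p(b) > 0 for every b. If (X*, Γ*) ∈ ℝ^{K×N} × ℝ^{D×K} is a global minimizer of the nested dropout cost C(X,Γ) = Σ_{b=1}^{K} p(b)·‖Y − Γ^{(b)} X^{(b)}‖_F², then (X*, Γ*) is also a global minimizer of the standard autoencoder cost C^{(K)}(X,Γ) = ‖Y − Γ X‖_F² over all X ∈ ℝ^{K×N}, Γ ∈ ℝ^{D×K}. -/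
open Matrix BigOperators

/-- The `b`-truncation cost `C⁽ᵇ⁾(X,Γ) = ‖Y − Γ⁽ᵇ⁾ X⁽ᵇ⁾‖_F²`, where `Γ⁽ᵇ⁾ X⁽ᵇ⁾`
uses only the first `b` columns of `Γ` and first `b` rows of `X`. -/
noncomputable def truncCost {D N K : ℕ} (Y : Matrix (Fin D) (Fin N) ℝ)
    (X : Matrix (Fin K) (Fin N) ℝ) (G : Matrix (Fin D) (Fin K) ℝ) (b : ℕ) : ℝ :=
  ∑ i, ∑ j, (Y i j - ∑ k : Fin K, if (k : ℕ) < b then G i k * X k j else 0) ^ 2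

/-- The nested dropout cost: mixture of the `b`-truncation costs, `b = 1, …, K`,
with mixing weights `p`. Here `b : Fin K` represents the truncation index `b+1`. -/
noncomputable def ndCost {D N K : ℕ} (Y : Matrix (Fin D) (Fin N) ℝ) (p : Fin K → ℝ)
    (X : Matrix (Fin K) (Fin N) ℝ) (G : Matrix (Fin D) (Fin K) ℝ) : ℝ :=
  ∑ b : Fin K, p b * truncCost Y X G ((b : ℕ) + 1)

/-!
Let `λ₁ ≥ ⋯ ≥ λ_D ≥ 0` be the eigenvalues of `Y Yᵀ`. By Ky Fan's maximum principle, the columns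
of `Y` have total squared projection at most `λ₁ + ⋯ + λ_b` onto any subspace of dimension `b`,
so every `b`-truncation cost is at least `‖Y‖² − (λ₁ + ⋯ + λ_b)` (Eckart–Young). Taking the
first `K` eigenvectors as columns of `Γ` and the corresponding coordinates of the columns of `Y`
as `X` attains all these bounds at once. Hence a minimizer of the nested dropout cost, a
positive combination of the truncation costs, attains each bound, in particular the one for
`b = K`.
-/

open Finset Module RealInnerProductSpace InnerProductSpace

theorem sum_mul_le_sum_filter_lt {n b : ℕ} {μ c : Fin n → ℝ} (hμ : Antitone μ)
    (hμ₀ : ∀ i, 0 ≤ μ i) (hc₀ : ∀ i, 0 ≤ c i) (hc₁ : ∀ i, c i ≤ 1) (hc : ∑ i, c i ≤ b) :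
    ∑ i, μ i * c i ≤ ∑ i : Fin n with i.val < b, μ i := by
  rcases lt_or_ge b n with hbn | hnb
  · -- the threshold `t = μ b` separates the first `b` values of `μ` from the others
    set t := μ ⟨b, hbn⟩
    have key (i : Fin n) : μ i * c i ≤
        (if (i : ℕ) < b then μ i else 0) + t * (c i - if (i : ℕ) < b then 1 else 0) := by
      split_ifs with hi
      · nlinarith [hμ (Fin.le_iff_val_le_val.mpr hi.le : i ≤ ⟨b, hbn⟩), hc₁ i]
      · nlinarith [hμ (Fin.le_iff_val_le_val.mpr (not_lt.mp hi) : (⟨b, hbn⟩ : Fin n) ≤ i), hc₀ i]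
    have hcard : ∑ i : Fin n, (if (i : ℕ) < b then (1 : ℝ) else 0) = b := by
      rw [sum_boole, Fin.card_filter_val_lt, min_eq_right hbn.le]
    calc ∑ i, μ i * c i
        ≤ ∑ i : Fin n, ((if (i : ℕ) < b then μ i else 0) +
            t * (c i - if (i : ℕ) < b then 1 else 0)) := sum_le_sum fun i _ => key i
      _ = (∑ i : Fin n with i.val < b, μ i) + t * (∑ i, c i - b) := by
          rw [sum_add_distrib, ← mul_sum, sum_sub_distrib, hcard, sum_filter]
      _ ≤ ∑ i : Fin n with i.val < b, μ i := by
          nlinarith [hμ₀ ⟨b, hbn⟩]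
  · rw [filter_true_of_mem fun i _ => i.isLt.trans_le hnb]
    exact sum_le_sum fun i _ => mul_le_of_le_one_right (hμ₀ i) (hc₁ i)

theorem Fin.sum_filter_val_lt_castLE {M : Type*} [AddCommMonoid M] {m n b : ℕ} (h : m ≤ n)
    (hb : b ≤ m) (f : Fin n → M) :
    ∑ k : Fin m with k.val < b, f (Fin.castLE h k) = ∑ i : Fin n with i.val < b, f i := by
  refine sum_nbij (Fin.castLE h) (by simp) (Fin.castLE_injective h).injOn (fun i hi => ?_)
    fun _ _ => rfl
  simp only [coe_filter, mem_univ, true_and, Set.mem_ofPred_eq] at hi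
  exact ⟨⟨i, hi.trans_le hb⟩, by simpa using hi, rfl⟩

theorem le_of_minimizes_weighted_sum {ι α : Type*} [Fintype ι] {f : ι → α → ℝ} {p : ι → ℝ}
    (hp : ∀ i, 0 < p i) {x₀ x : α} (h₀ : ∀ i y, f i x₀ ≤ f i y)
    (hx : ∑ i, p i * f i x ≤ ∑ i, p i * f i x₀) (i : ι) (y : α) : f i x ≤ f i y := by
  have hle : ∀ i ∈ univ, p i * f i x₀ ≤ p i * f i x := fun i _ =>
    mul_le_mul_of_nonneg_left (h₀ i x) (hp i).le
  have heq := (sum_eq_sum_iff_of_le hle).mp (le_antisymm (sum_le_sum hle) hx) i (mem_univ i)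
  calc f i x = f i x₀ := (mul_left_cancel₀ (hp i).ne' heq).symm
    _ ≤ f i y := h₀ i y

section InnerProductSpace

variable {E : Type*} [NormedAddCommGroup E] [InnerProductSpace ℝ E]

theorem Orthonormal.norm_sub_sum_inner_smul_sq {ι : Type*} {v : ι → E} (hv : Orthonormal ℝ v)
    (s : Finset ι) (x : E) :
    ‖x - ∑ i ∈ s, ⟪v i, x⟫ • v i‖ ^ 2 = ‖x‖ ^ 2 - ∑ i ∈ s, ⟪v i, x⟫ ^ 2 := by
  have hcross : ⟪x, ∑ i ∈ s, ⟪v i, x⟫ • v i⟫ = ∑ i ∈ s, ⟪v i, x⟫ ^ 2 := by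
    simp_rw [inner_sum, real_inner_smul_right, real_inner_comm x, sq]
  have hsq : ‖∑ i ∈ s, ⟪v i, x⟫ • v i‖ ^ 2 = ∑ i ∈ s, ⟪v i, x⟫ ^ 2 := by
    rw [← real_inner_self_eq_norm_sq, hv.inner_sum]
    simp_rw [conj_trivial, sq]
  rw [norm_sub_sq_real, hcross, hsq]
  ring

variable {ι : Type*} [Fintype ι]

/-- For the columns `y` of a matrix `Y`, this is `Y Yᵀ`. -/
noncomputable def scatter (y : ι → E) : E →ₗ[ℝ] E :=
  ∑ j, (rankOne ℝ (y j) (y j) : E →L[ℝ] E)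

theorem isPositive_scatter (y : ι → E) : (scatter y).IsPositive :=
  LinearMap.isPositive_sum _ fun j _ => (isPositive_rankOne_self (y j)).toLinearMap

theorem inner_scatter_self (y : ι → E) (v : E) : ⟪scatter y v, v⟫ = ∑ j, ⟪y j, v⟫ ^ 2 := by
  simp [scatter, sum_inner, real_inner_smul_left, sq]

variable [FiniteDimensional ℝ E] {n : ℕ} (hn : finrank ℝ E = n)

namespace LinearMap.IsSymmetric

variable {T : E →ₗ[ℝ] E}

theorem inner_apply_self_eq_sum_eigenvalues (hT : T.IsSymmetric) (v : E) :
    ⟪T v, v⟫ = ∑ i, hT.eigenvalues hn i * ⟪hT.eigenvectorBasis hn i, v⟫ ^ 2 := by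
  rw [← (hT.eigenvectorBasis hn).sum_inner_mul_inner (T v) v]
  refine sum_congr rfl fun i _ => ?_
  rw [hT, hT.apply_eigenvectorBasis]
  simp only [RCLike.ofReal_real_eq_id, id_eq]
  rw [real_inner_smul_right, real_inner_comm v]
  ring

theorem inner_apply_eigenvectorBasis (hT : T.IsSymmetric) (i : Fin n) :
    ⟪T (hT.eigenvectorBasis hn i), hT.eigenvectorBasis hn i⟫ = hT.eigenvalues hn i := by
  rw [hT.apply_eigenvectorBasis]
  simp only [RCLike.ofReal_real_eq_id, id_eq]
  rw [real_inner_smul_left, real_inner_self_eq_norm_sq, (hT.eigenvectorBasis hn).norm_eq_one,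
    one_pow, mul_one]

end LinearMap.IsSymmetric

theorem LinearMap.IsPositive.sum_inner_apply_le_sum_eigenvalues {T : E →ₗ[ℝ] E}
    (hT : T.IsPositive) {b : ℕ} (hb : Fintype.card ι ≤ b) {q : ι → E} (hq : Orthonormal ℝ q) :
    ∑ l, ⟪T (q l), q l⟫ ≤ ∑ i : Fin n with i.val < b, hT.isSymmetric.eigenvalues hn i := by
  set e := hT.isSymmetric.eigenvectorBasis hn
  set c : Fin n → ℝ := fun i => ∑ l, ⟪q l, e i⟫ ^ 2
  have hc₁ (i : Fin n) : c i ≤ 1 := by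
    simpa [e.norm_eq_one] using hq.sum_inner_products_le (e i) (s := univ)
  have hc : ∑ i, c i ≤ b := by
    calc ∑ i, c i = ∑ l, ‖q l‖ ^ 2 := by
          rw [sum_comm]
          exact sum_congr rfl fun l _ => e.sum_sq_inner_left (q l)
      _ = Fintype.card ι := by simp [hq.norm_eq_one]
      _ ≤ b := by exact_mod_cast hb
  calc ∑ l, ⟪T (q l), q l⟫ = ∑ i, hT.isSymmetric.eigenvalues hn i * c i := by
        simp_rw [hT.isSymmetric.inner_apply_self_eq_sum_eigenvalues hn, c, mul_sum,
          real_inner_comm (e _)]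
        exact sum_comm
    _ ≤ _ := sum_mul_le_sum_filter_lt (hT.isSymmetric.eigenvalues_antitone hn)
        (hT.nonneg_eigenvalues hn) (fun i => sum_nonneg fun l _ => sq_nonneg _) hc₁ hc

theorem sum_norm_starProjection_sq_le_sum_eigenvalues (y : ι → E) (W : Submodule ℝ E) {b : ℕ}
    (hW : finrank ℝ W ≤ b) :
    ∑ j, ‖W.starProjection (y j)‖ ^ 2 ≤
      ∑ i : Fin n with i.val < b, (isPositive_scatter y).isSymmetric.eigenvalues hn i := by
  set q := stdOrthonormalBasis ℝ W
  have hq : Orthonormal ℝ (fun l => (q l : E)) := q.orthonormal.comp_linearIsometry W.subtypeₗᵢ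
  have hproj (x : E) : ‖W.starProjection x‖ ^ 2 = ∑ l, ⟪(q l : E), x⟫ ^ 2 := by
    have : ‖W.starProjection x‖ = ‖W.orthogonalProjectionOnto x‖ := rfl
    rw [this, ← q.sum_sq_inner_right]
    simp
  calc ∑ j, ‖W.starProjection (y j)‖ ^ 2 = ∑ l, ⟪scatter y (q l), q l⟫ := by
        simp_rw [inner_scatter_self, hproj, real_inner_comm (y _)]
        exact sum_comm
    _ ≤ _ := (isPositive_scatter y).sum_inner_apply_le_sum_eigenvalues hn (by simpa using hW) hq

theorem sum_norm_sq_sub_sum_eigenvalues_le (y w : ι → E) {W : Submodule ℝ E}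
    (hw : ∀ j, w j ∈ W) {b : ℕ} (hW : finrank ℝ W ≤ b) :
    ∑ j, ‖y j‖ ^ 2 - ∑ i : Fin n with i.val < b, (isPositive_scatter y).isSymmetric.eigenvalues hn i
      ≤ ∑ j, ‖y j - w j‖ ^ 2 := by
  have hbest (j : ι) : ‖y j‖ ^ 2 - ‖W.starProjection (y j)‖ ^ 2 ≤ ‖y j - w j‖ ^ 2 := by
    have hpyth :
        ‖y j‖ ^ 2 = ‖W.starProjection (y j)‖ ^ 2 + ‖y j - W.starProjection (y j)‖ ^ 2 := by
      rw [W.norm_sq_eq_add_norm_sq_starProjection (y j), W.starProjection_orthogonal']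
      rfl
    have hmin : ‖y j - W.starProjection (y j)‖ ≤ ‖y j - w j‖ := by
      rw [Submodule.starProjection_minimal]
      refine ciInf_le ?_ (⟨w j, hw j⟩ : W)
      exact ⟨0, by rintro _ ⟨x, rfl⟩; positivity⟩
    nlinarith [norm_nonneg (y j - W.starProjection (y j))]
  have := sum_le_sum fun j (_ : j ∈ univ) => hbest j
  rw [sum_sub_distrib] at this
  linarith [sum_norm_starProjection_sq_le_sum_eigenvalues hn y W hW]

theorem sum_norm_sub_sum_eigenvectorBasis_sq (y : ι → E) (b : ℕ) :
    ∑ j, ‖y j - ∑ i : Fin n with i.val < b,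
        ⟪(isPositive_scatter y).isSymmetric.eigenvectorBasis hn i, y j⟫ •
          (isPositive_scatter y).isSymmetric.eigenvectorBasis hn i‖ ^ 2 =
      ∑ j, ‖y j‖ ^ 2 -
        ∑ i : Fin n with i.val < b, (isPositive_scatter y).isSymmetric.eigenvalues hn i := by
  set e := (isPositive_scatter y).isSymmetric.eigenvectorBasis hn
  rw [sum_congr rfl fun j _ => e.orthonormal.norm_sub_sum_inner_smul_sq _ (y j),
    Finset.sum_sub_distrib, sum_comm]
  congr 1
  refine sum_congr rfl fun i _ => ?_
  rw [← (isPositive_scatter y).isSymmetric.inner_apply_eigenvectorBasis hn, inner_scatter_self]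
  exact sum_congr rfl fun j _ => by rw [real_inner_comm]

end InnerProductSpace

noncomputable def euclideanCol {m n : ℕ} (A : Matrix (Fin m) (Fin n) ℝ) (j : Fin n) :
    EuclideanSpace ℝ (Fin m) :=
  WithLp.toLp 2 fun i => A i j

section TruncCost

variable {D N K : ℕ} (Y : Matrix (Fin D) (Fin N) ℝ)

theorem truncCost_eq_sum_norm_sq (X : Matrix (Fin K) (Fin N) ℝ) (G : Matrix (Fin D) (Fin K) ℝ)
    (b : ℕ) :
    truncCost Y X G b =
      ∑ j, ‖euclideanCol Y j - ∑ k : Fin K with k.val < b, X k j • euclideanCol G k‖ ^ 2 := by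
  rw [truncCost, sum_comm]
  refine sum_congr rfl fun j _ => ?_
  rw [EuclideanSpace.real_norm_sq_eq]
  simp [euclideanCol, ← sum_filter, mul_comm]

theorem truncCost_full (X : Matrix (Fin K) (Fin N) ℝ) (G : Matrix (Fin D) (Fin K) ℝ) :
    truncCost Y X G K = ∑ i, ∑ j, (Y i j - (G * X) i j) ^ 2 := by
  simp [truncCost, Matrix.mul_apply]

theorem exists_forall_truncCost_le (hKD : K ≤ D) :
    ∃ (X₀ : Matrix (Fin K) (Fin N) ℝ) (G₀ : Matrix (Fin D) (Fin K) ℝ),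
      ∀ b ≤ K, ∀ (X : Matrix (Fin K) (Fin N) ℝ) (G : Matrix (Fin D) (Fin K) ℝ),
        truncCost Y X₀ G₀ b ≤ truncCost Y X G b := by
  set y := euclideanCol Y
  have hD : finrank ℝ (EuclideanSpace ℝ (Fin D)) = D := finrank_euclideanSpace_fin
  set e := (isPositive_scatter y).isSymmetric.eigenvectorBasis hD
  refine ⟨of fun k j => ⟪e (Fin.castLE hKD k), y j⟫, of fun i k => e (Fin.castLE hKD k) i,
    fun b hb X G => ?_⟩
  have hcol (k : Fin K) :
      euclideanCol (of fun i k => e (Fin.castLE hKD k) i) k = e (Fin.castLE hKD k) := rfl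
  have hsum (j : Fin N) :
      ∑ k : Fin K with k.val < b, ⟪e (Fin.castLE hKD k), y j⟫ • e (Fin.castLE hKD k) =
        ∑ i : Fin D with i.val < b, ⟪e i, y j⟫ • e i :=
    Fin.sum_filter_val_lt_castLE hKD hb fun i => ⟪e i, y j⟫ • e i
  rw [truncCost_eq_sum_norm_sq, truncCost_eq_sum_norm_sq]
  simp_rw [of_apply, hcol, hsum]
  rw [sum_norm_sub_sum_eigenvectorBasis_sq hD y b]
  set W := Submodule.span ℝ (((univ.filter fun k : Fin K => k.val < b).image (euclideanCol G) :
    Finset (EuclideanSpace ℝ (Fin D))) : Set (EuclideanSpace ℝ (Fin D)))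
  refine sum_norm_sq_sub_sum_eigenvalues_le hD y _ (W := W) (fun j => ?_) ?_
  · exact Submodule.sum_mem _ fun k hk =>
      Submodule.smul_mem _ _ (Submodule.subset_span (by simpa using mem_image_of_mem _ hk))
  · calc finrank ℝ W ≤ _ := finrank_span_finset_le_card _
      _ ≤ #(univ.filter fun k : Fin K => k.val < b) := card_image_le
      _ ≤ b := by rw [Fin.card_filter_val_lt]; exact min_le_right _ _

end TruncCost

theorem nd_minimizer_minimizes_autoencoder_general
    {D N K : ℕ} (hK : 1 ≤ K) (hKD : K ≤ D)
    (Y : Matrix (Fin D) (Fin N) ℝ) (p : Fin K → ℝ)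
    (hp : ∀ b, 0 < p b)
    (Xs : Matrix (Fin K) (Fin N) ℝ) (Gs : Matrix (Fin D) (Fin K) ℝ)
    (hmin : ∀ (X : Matrix (Fin K) (Fin N) ℝ) (G : Matrix (Fin D) (Fin K) ℝ),
      ndCost Y p Xs Gs ≤ ndCost Y p X G) :
    ∀ (X : Matrix (Fin K) (Fin N) ℝ) (G : Matrix (Fin D) (Fin K) ℝ),
      ∑ i, ∑ j, (Y i j - (Gs * Xs) i j) ^ 2 ≤ ∑ i, ∑ j, (Y i j - (G * X) i j) ^ 2 := by
  intro X G
  obtain ⟨X₀, G₀, hX₀G₀⟩ := exists_forall_truncCost_le Y hKD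
  have hlast := le_of_minimizes_weighted_sum
    (f := fun (b : Fin K) (XG : Matrix (Fin K) (Fin N) ℝ × Matrix (Fin D) (Fin K) ℝ) =>
      truncCost Y XG.1 XG.2 (b + 1))
    hp (x₀ := (X₀, G₀)) (x := (Xs, Gs)) (fun b XG => hX₀G₀ _ b.isLt XG.1 XG.2) (hmin X₀ G₀)
    ⟨K - 1, by omega⟩ (X, G)
  simpa only [Nat.sub_add_cancel hK, truncCost_full] using hlast

/-- Every global minimizer of the nested dropout cost is a global minimizer of the
standard autoencoder cost `‖Y − Γ X‖_F²`. -/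
theorem nd_minimizer_minimizes_autoencoder
    {D N K : ℕ} (hK : 1 ≤ K) (hKD : K ≤ D)
    (Y : Matrix (Fin D) (Fin N) ℝ) (p : Fin K → ℝ)
    (hp : ∀ b, 0 < p b) (hsum : ∑ b, p b = 1)
    (Xs : Matrix (Fin K) (Fin N) ℝ) (Gs : Matrix (Fin D) (Fin K) ℝ)
    (hmin : ∀ (X : Matrix (Fin K) (Fin N) ℝ) (G : Matrix (Fin D) (Fin K) ℝ),
      ndCost Y p Xs Gs ≤ ndCost Y p X G) :
    ∀ (X : Matrix (Fin K) (Fin N) ℝ) (G : Matrix (Fin D) (Fin K) ℝ),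
      ∑ i, ∑ j, (Y i j - (Gs * Xs) i j) ^ 2 ≤ ∑ i, ∑ j, (Y i j - (G * X) i j) ^ 2 :=
  nd_minimizer_minimizes_autoencoder_general hK hKD Y p hp Xs Gs hmin
end

section
/- Let T ∈ ℝ^{K×K} be commutative in its truncation and inversion. Then every diagonal entry of T is nonzero, and for each b ∈ {2,…,K}, either the column vector A_b = (T_{1b}, …, T_{(b−1)b}) is zero or the row vector B_b = (T_{b1}, …, T_{b(b−1)}) is zero. -/
open Matrix BigOperators

/-- The leading principal `b × b` minor of a `K × K` matrix. -/
def leadMinor {K : ℕ} (T : Matrix (Fin K) (Fin K) ℝ) (b : ℕ) (h : b ≤ K) :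
    Matrix (Fin b) (Fin b) ℝ :=
  T.submatrix (Fin.castLE h) (Fin.castLE h)

/-- `T` is commutative in its truncation and inversion: `T` is invertible, each
leading principal minor is invertible, and the leading principal `b × b` minor of
`T⁻¹` equals the inverse of the leading principal `b × b` minor of `T`. -/
def CommTruncInv {K : ℕ} (T : Matrix (Fin K) (Fin K) ℝ) : Prop :=
  IsUnit T ∧ ∀ (b : ℕ) (h : b ≤ K), 1 ≤ b →
    IsUnit (leadMinor T b h) ∧ leadMinor T⁻¹ b h = (leadMinor T b h)⁻¹

lemma entry_mulTS {K : ℕ} (T : Matrix (Fin K) (Fin K) ℝ) (hT : CommTruncInv T)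
    (n : ℕ) (h : n ≤ K) (hn : 1 ≤ n) (i j : Fin n) :
    ∑ k : Fin n, T (Fin.castLE h i) (Fin.castLE h k) * T⁻¹ (Fin.castLE h k) (Fin.castLE h j)
      = if i = j then 1 else 0 := by
  obtain ⟨hu, heq⟩ := hT.2 n h hn
  have hdet : IsUnit (leadMinor T n h).det := (Matrix.isUnit_iff_isUnit_det _).1 hu
  have h1 : leadMinor T n h * leadMinor T⁻¹ n h = 1 := by
    rw [heq]; exact Matrix.mul_nonsing_inv _ hdet
  have := congrFun (congrFun h1 i) j
  simpa [leadMinor, Matrix.mul_apply, Matrix.one_apply] using this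

lemma entry_mulST {K : ℕ} (T : Matrix (Fin K) (Fin K) ℝ) (hT : CommTruncInv T)
    (n : ℕ) (h : n ≤ K) (hn : 1 ≤ n) (i j : Fin n) :
    ∑ k : Fin n, T⁻¹ (Fin.castLE h i) (Fin.castLE h k) * T (Fin.castLE h k) (Fin.castLE h j)
      = if i = j then 1 else 0 := by
  obtain ⟨hu, heq⟩ := hT.2 n h hn
  have hdet : IsUnit (leadMinor T n h).det := (Matrix.isUnit_iff_isUnit_det _).1 hu
  have h1 : leadMinor T⁻¹ n h * leadMinor T n h = 1 := by
    rw [heq]; exact Matrix.nonsing_inv_mul _ hdet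
  have := congrFun (congrFun h1 i) j
  simpa [leadMinor, Matrix.mul_apply, Matrix.one_apply] using this

lemma cross_TS {K : ℕ} (T : Matrix (Fin K) (Fin K) ℝ) (hT : CommTruncInv T)
    (b i j : Fin K) (hi : (i : ℕ) < (b : ℕ)) (hj : (j : ℕ) < (b : ℕ)) :
    T i b * T⁻¹ b j = 0 := by
  have hb1 : (b : ℕ) + 1 ≤ K := b.isLt
  have hb0 : (b : ℕ) ≤ K := le_of_lt b.isLt
  have A := entry_mulTS T hT ((b : ℕ) + 1) hb1 (by omega)
      ⟨(i : ℕ), by omega⟩ ⟨(j : ℕ), by omega⟩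
  have B := entry_mulTS T hT (b : ℕ) hb0 (by omega) ⟨(i : ℕ), hi⟩ ⟨(j : ℕ), hj⟩
  rw [Fin.sum_univ_castSucc] at A
  have e1 : Fin.castLE hb1 (⟨(i : ℕ), by omega⟩ : Fin ((b : ℕ) + 1)) = i := by
    ext; simp
  have e2 : Fin.castLE hb1 (⟨(j : ℕ), by omega⟩ : Fin ((b : ℕ) + 1)) = j := by
    ext; simp
  have e3 : Fin.castLE hb1 (Fin.last (b : ℕ)) = b := by ext; simp
  have e4 : ∀ k : Fin (b : ℕ), Fin.castLE hb1 (Fin.castSucc k) = Fin.castLE hb0 k := by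
    intro k; ext; simp
  have e1' : Fin.castLE hb0 (⟨(i : ℕ), hi⟩ : Fin (b : ℕ)) = i := by ext; simp
  have e2' : Fin.castLE hb0 (⟨(j : ℕ), hj⟩ : Fin (b : ℕ)) = j := by ext; simp
  simp only [e1', e2'] at B
  simp only [e1, e2, e3, e4] at A
  rw [B] at A
  simp only [Fin.mk.injEq] at A
  by_cases hc : (i : ℕ) = (j : ℕ) <;> simp [hc] at A <;> rcases A with h | h <;> simp [h]

lemma cross_ST {K : ℕ} (T : Matrix (Fin K) (Fin K) ℝ) (hT : CommTruncInv T)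
    (b i j : Fin K) (hi : (i : ℕ) < (b : ℕ)) (hj : (j : ℕ) < (b : ℕ)) :
    T⁻¹ i b * T b j = 0 := by
  have hb1 : (b : ℕ) + 1 ≤ K := b.isLt
  have hb0 : (b : ℕ) ≤ K := le_of_lt b.isLt
  have A := entry_mulST T hT ((b : ℕ) + 1) hb1 (by omega)
      ⟨(i : ℕ), by omega⟩ ⟨(j : ℕ), by omega⟩
  have B := entry_mulST T hT (b : ℕ) hb0 (by omega) ⟨(i : ℕ), hi⟩ ⟨(j : ℕ), hj⟩
  rw [Fin.sum_univ_castSucc] at A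
  have e1 : Fin.castLE hb1 (⟨(i : ℕ), by omega⟩ : Fin ((b : ℕ) + 1)) = i := by
    ext; simp
  have e2 : Fin.castLE hb1 (⟨(j : ℕ), by omega⟩ : Fin ((b : ℕ) + 1)) = j := by
    ext; simp
  have e3 : Fin.castLE hb1 (Fin.last (b : ℕ)) = b := by ext; simp
  have e4 : ∀ k : Fin (b : ℕ), Fin.castLE hb1 (Fin.castSucc k) = Fin.castLE hb0 k := by
    intro k; ext; simp
  have e1' : Fin.castLE hb0 (⟨(i : ℕ), hi⟩ : Fin (b : ℕ)) = i := by ext; simp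
  have e2' : Fin.castLE hb0 (⟨(j : ℕ), hj⟩ : Fin (b : ℕ)) = j := by ext; simp
  simp only [e1', e2'] at B
  simp only [e1, e2, e3, e4] at A
  rw [B] at A
  simp only [Fin.mk.injEq] at A
  by_cases hc : (i : ℕ) = (j : ℕ) <;> simp [hc] at A <;> rcases A with h | h <;> simp [h]

lemma main_disj {K : ℕ} (T : Matrix (Fin K) (Fin K) ℝ) (hT : CommTruncInv T) (b : Fin K) :
    (∀ i : Fin K, (i : ℕ) < (b : ℕ) → T i b = 0) ∨
    (∀ i : Fin K, (i : ℕ) < (b : ℕ) → T b i = 0) := by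
  by_cases hA : ∀ i : Fin K, (i : ℕ) < (b : ℕ) → T i b = 0
  · exact Or.inl hA
  push_neg at hA
  obtain ⟨i₀, hi₀, hne⟩ := hA
  have hSrow : ∀ j : Fin K, (j : ℕ) < (b : ℕ) → T⁻¹ b j = 0 := by
    intro j hj
    exact (mul_eq_zero.1 (cross_TS T hT b i₀ j hi₀ hj)).resolve_left hne
  have hb1 : (b : ℕ) + 1 ≤ K := b.isLt
  have e3 : Fin.castLE hb1 (Fin.last (b : ℕ)) = b := by ext; simp
  have sum_eq : ∀ j : Fin ((b : ℕ) + 1),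
      T⁻¹ b b * T b (Fin.castLE hb1 j) = if Fin.last (b : ℕ) = j then 1 else 0 := by
    intro j
    have A := entry_mulST T hT ((b : ℕ) + 1) hb1 (by omega) (Fin.last _) j
    rw [Fin.sum_univ_castSucc] at A
    rw [Finset.sum_eq_zero, zero_add] at A
    · rwa [e3] at A
    · intro k _
      simp only [e3]
      rw [hSrow _ (by simp), zero_mul]
  have hTbb : T⁻¹ b b * T b b = 1 := by
    have := sum_eq (Fin.last _)
    simpa [e3] using this
  have hSbb : T⁻¹ b b ≠ 0 := fun h => by simp [h] at hTbb
  right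
  intro j hj
  have A := sum_eq ⟨(j : ℕ), by omega⟩
  have e5 : Fin.castLE hb1 (⟨(j : ℕ), by omega⟩ : Fin ((b : ℕ) + 1)) = j := by ext; simp
  rw [e5, if_neg (by simp [Fin.ext_iff]; omega)] at A
  exact (mul_eq_zero.1 A).resolve_left hSbb

/-- If `T` is commutative in its truncation and inversion, then all diagonal entries
of `T` are nonzero, and for each `b ∈ {2,…,K}` (represented by `b : Fin K` with
`1 ≤ b`, so that 1-based index is `b+1`), either the above-diagonal column segment
`A_b` or the left-of-diagonal row segment `B_b` vanishes. -/
theorem commTruncInv_diag_ne_zero_and_cross_vanishes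
    {K : ℕ} (T : Matrix (Fin K) (Fin K) ℝ) (hT : CommTruncInv T) :
    (∀ i : Fin K, T i i ≠ 0) ∧
    (∀ b : Fin K, 1 ≤ (b : ℕ) →
      (∀ i : Fin K, (i : ℕ) < (b : ℕ) → T i b = 0) ∨
      (∀ i : Fin K, (i : ℕ) < (b : ℕ) → T b i = 0)) := by
  refine ⟨?_, fun b _ => main_disj T hT b⟩
  intro i
  have hb1 : (i : ℕ) + 1 ≤ K := i.isLt
  have e3 : Fin.castLE hb1 (Fin.last (i : ℕ)) = i := by ext; simp
  rcases main_disj T hT i with h | h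
  · have A := entry_mulST T hT ((i : ℕ) + 1) hb1 (by omega) (Fin.last _) (Fin.last _)
    rw [Fin.sum_univ_castSucc] at A
    rw [Finset.sum_eq_zero, zero_add] at A
    · rw [e3, if_pos rfl] at A
      intro h0
      rw [h0, mul_zero] at A
      exact one_ne_zero A.symm
    · intro k _
      simp only [e3]
      rw [h _ (by simp), mul_zero]
  · have A := entry_mulTS T hT ((i : ℕ) + 1) hb1 (by omega) (Fin.last _) (Fin.last _)
    rw [Fin.sum_univ_castSucc] at A
    rw [Finset.sum_eq_zero, zero_add] at A
    · rw [e3, if_pos rfl] at A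
      intro h0
      rw [h0, zero_mul] at A
      exact one_ne_zero A.symm
    · intro k _
      simp only [e3]
      rw [h _ (by simp), zero_mul]
end

section
/- Let T ∈ ℝ^{K×K} be commutative in its truncation and inversion. Then for every b ∈ {2,…,K} and all indices i, j ∈ {1,…,b−1}, the product T_{ib}·T_{bj} = 0; that is, the outer product of the above-diagonal column segment A_b = (T_{1b}, …, T_{(b−1)b}) with the left-of-diagonal row segment B_b = (T_{b1}, …, T_{b(b−1)}) is the zero matrix. -/
open Matrix BigOperators

/-! Split the leading `(b + 1)`-minor as `M = [[A, u], [v, d]]`. By the hypothesis its inverse,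
the leading minor of `T⁻¹`, is `[[A⁻¹, x], [y, e]]`. The top-left block of `M⁻¹ M = 1` gives `x v = 0`,
and the right column of `M M⁻¹ = 1` gives `A x + u e = 0` and `v x + d e = 1`. Hence
`u e v = -A x v = 0`, while `v x = tr (x v) = 0` forces `d e = 1`; so `e` is a unit and `u v = 0`. -/

namespace Matrix

variable {m n α : Type*} [Fintype m] [Fintype n] [DecidableEq m] [DecidableEq n]

section Ring

variable [Ring α] {A P : Matrix m m α} {B Q : Matrix m n α} {C R : Matrix n m α}
  {D S : Matrix n n α}

theorem mul_eq_zero_of_fromBlocks_mul_eq_one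
    (hNM : fromBlocks P Q R S * fromBlocks A B C D = 1) (hPA : P * A = 1) : Q * C = 0 := by
  rw [fromBlocks_multiply, ← fromBlocks_one, fromBlocks_inj] at hNM
  simpa [hPA] using hNM.1

theorem mul_mul_eq_zero_of_fromBlocks_mul_eq_one
    (hMN : fromBlocks A B C D * fromBlocks P Q R S = 1)
    (hNM : fromBlocks P Q R S * fromBlocks A B C D = 1) (hPA : P * A = 1) :
    B * S * C = 0 := by
  rw [fromBlocks_multiply, ← fromBlocks_one, fromBlocks_inj] at hMN
  have hBS : B * S = -(A * Q) := eq_neg_of_add_eq_zero_right hMN.2.1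
  rw [hBS, Matrix.neg_mul, Matrix.mul_assoc, mul_eq_zero_of_fromBlocks_mul_eq_one hNM hPA,
    Matrix.mul_zero, neg_zero]

end Ring

theorem toBlocks₁₂_mul_toBlocks₂₁_eq_zero [CommRing α] {M : Matrix (m ⊕ Fin 1) (m ⊕ Fin 1) α}
    (hM : IsUnit M) (h₁₁ : M⁻¹.toBlocks₁₁ * M.toBlocks₁₁ = 1) :
    M.toBlocks₁₂ * M.toBlocks₂₁ = 0 := by
  have hdet : IsUnit M.det := (isUnit_iff_isUnit_det M).mp hM
  have hMN := M.mul_nonsing_inv hdet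
  have hNM := M.nonsing_inv_mul hdet
  generalize M⁻¹ = N at hMN hNM h₁₁
  rw [← fromBlocks_toBlocks M, ← fromBlocks_toBlocks N] at hMN hNM
  have hQC := mul_eq_zero_of_fromBlocks_mul_eq_one hNM h₁₁
  have hBSC := mul_mul_eq_zero_of_fromBlocks_mul_eq_one hMN hNM h₁₁
  rw [fromBlocks_multiply, ← fromBlocks_one, fromBlocks_inj] at hMN
  have hCQ : (M.toBlocks₂₁ * N.toBlocks₁₂) 0 0 = 0 := by
    simpa [trace, hQC] using trace_mul_comm M.toBlocks₂₁ N.toBlocks₁₂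
  have hS : IsUnit (N.toBlocks₂₂ 0 0) := by
    have := congrFun₂ hMN.2.2.2 0 0
    rw [add_apply, hCQ, zero_add, mul_apply, Fin.sum_univ_one, one_apply_eq] at this
    exact .of_mul_eq_one_right _ this
  ext i j
  have := congrFun₂ hBSC i j
  simp only [mul_apply, Fin.sum_univ_one, Fin.isValue, zero_apply] at this ⊢
  rw [mul_right_comm] at this
  exact hS.mul_left_eq_zero.mp this

end Matrix

section LeadMinor

variable {K b : ℕ}

abbrev leadMinorSplit (T : Matrix (Fin K) (Fin K) ℝ) (h : b + 1 ≤ K) :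
    Matrix (Fin b ⊕ Fin 1) (Fin b ⊕ Fin 1) ℝ :=
  (leadMinor T (b + 1) h).submatrix finSumFinEquiv finSumFinEquiv

theorem toBlocks₁₁_leadMinorSplit (T : Matrix (Fin K) (Fin K) ℝ) (h : b + 1 ≤ K) :
    (leadMinorSplit T h).toBlocks₁₁ = leadMinor T b (by omega) := by
  ext i j
  rfl

theorem CommTruncInv.toBlocks₁₂_mul_toBlocks₂₁_leadMinorSplit {T : Matrix (Fin K) (Fin K) ℝ}
    (hT : CommTruncInv T) (hb : 1 ≤ b) (h : b + 1 ≤ K) :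
    (leadMinorSplit T h).toBlocks₁₂ * (leadMinorSplit T h).toBlocks₂₁ = 0 := by
  obtain ⟨hU₁, hE₁⟩ := hT.2 (b + 1) h (by omega)
  obtain ⟨hU, hE⟩ := hT.2 b (by omega) hb
  refine Matrix.toBlocks₁₂_mul_toBlocks₂₁_eq_zero ((isUnit_submatrix_equiv _ _).2 hU₁) ?_
  rw [inv_submatrix_equiv, ← hE₁, toBlocks₁₁_leadMinorSplit, toBlocks₁₁_leadMinorSplit, hE]
  exact nonsing_inv_mul _ ((isUnit_iff_isUnit_det _).mp hU)

end LeadMinor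

-- `b : Fin K` is 0-based: it is the paper's index `b + 1`.
/-- If `T` is commutative in its truncation and inversion, then for every
`b ∈ {2,…,K}` (represented by `b : Fin K` with `1 ≤ b`, 1-based index `b+1`) and
all indices `i, j < b`, the product `T i b * T b j = 0`; i.e. the outer product of
the above-diagonal column segment `A_b` with the left-of-diagonal row segment `B_b`
is the zero matrix. -/
theorem commTruncInv_outer_product_zero
    {K : ℕ} (T : Matrix (Fin K) (Fin K) ℝ) (hT : CommTruncInv T) :
    ∀ b : Fin K, 1 ≤ (b : ℕ) →
      ∀ i j : Fin K, (i : ℕ) < (b : ℕ) → (j : ℕ) < (b : ℕ) →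
        T i b * T b j = 0 := by
  intro b hb i j hi hj
  have := congrFun₂ (hT.toBlocks₁₂_mul_toBlocks₂₁_leadMinorSplit hb b.isLt) ⟨i, hi⟩ ⟨j, hj⟩
  simp only [mul_apply, Fin.sum_univ_one, toBlocks₁₂, toBlocks₂₁, submatrix_apply, leadMinor,
    Matrix.zero_apply] at this
  exact this
end

section
/- Let σ be a permutation of {1,…,K} with σ ≠ identity, and let P ∈ ℝ^{K×K} be its permutation matrix (P_{ij} = 1 if j = σ(i), else 0). Then some leading principal minor of P is singular; consequently P is not commutative in its truncation and inversion. -/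
open Matrix BigOperators

/-- If `σ` is a non-identity permutation of `{1,…,K}` with permutation matrix `P`
(`P i j = 1` iff `j = σ i`), then some leading principal minor of `P` is singular;
consequently `P` is not commutative in its truncation and inversion. -/
theorem perm_matrix_not_commTruncInv
    {K : ℕ} (σ : Equiv.Perm (Fin K)) (hσ : σ ≠ Equiv.refl (Fin K))
    (P : Matrix (Fin K) (Fin K) ℝ)
    (hP : ∀ i j : Fin K, P i j = if j = σ i then 1 else 0) :
    (∃ (b : ℕ) (h : b ≤ K), 1 ≤ b ∧ ¬ IsUnit (leadMinor P b h)) ∧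
    ¬ CommTruncInv P := by
  have hex : ∃ i : Fin K, σ i ≠ i := by
    by_contra h
    push_neg at h
    exact hσ (Equiv.ext fun i => h i)
  -- minimal non-fixed index
  classical
  have hexn : ∃ n : ℕ, ∃ hn : n < K, σ ⟨n, hn⟩ ≠ ⟨n, hn⟩ := by
    obtain ⟨i, hi⟩ := hex
    exact ⟨i.1, i.2, by simpa using hi⟩
  let n := Nat.find hexn
  obtain ⟨hn, hne⟩ := Nat.find_spec hexn
  set i0 : Fin K := ⟨n, hn⟩ with hi0
  have hmin : ∀ j : Fin K, (j : ℕ) < n → σ j = j := by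
    intro j hj
    by_contra hc
    exact Nat.find_min hexn (m := j.1) hj ⟨j.2, by simpa using hc⟩
  -- σ i0 > i0
  have hgt : (n : ℕ) < (σ i0 : ℕ) := by
    rcases lt_trichotomy ((σ i0 : ℕ)) n with h | h | h
    · exfalso
      have := hmin (σ i0) h
      exact hne (σ.injective this)
    · exfalso
      apply hne
      exact Fin.ext h
    · exact h
  have key : ¬ IsUnit (leadMinor P (n + 1) hn) := by
    rw [Matrix.isUnit_iff_isUnit_det]
    have hdet : (leadMinor P (n + 1) hn).det = 0 := by
      apply Matrix.det_eq_zero_of_row_eq_zero (⟨n, Nat.lt_succ_self n⟩ : Fin (n + 1))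
      intro j
      show P (Fin.castLE hn ⟨n, _⟩) (Fin.castLE hn j) = 0
      rw [hP]
      have hje : Fin.castLE hn ⟨n, Nat.lt_succ_self n⟩ = i0 := rfl
      rw [if_neg]
      intro hc
      rw [hje] at hc
      have : ((Fin.castLE hn j : Fin K) : ℕ) < (σ i0 : ℕ) :=
        lt_of_le_of_lt (Nat.lt_succ_iff.mp j.2) hgt
      rw [hc] at this
      exact lt_irrefl _ this
    rw [hdet]
    simp
  refine ⟨⟨n + 1, hn, Nat.le_add_left 1 n, key⟩, fun hC => key (hC.2 (n + 1) hn (Nat.le_add_left 1 n)).1⟩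
end

section
/- Let Y ∈ ℝ^{D×N} with 1 ≤ K ≤ min(D,N), and suppose Y admits a singular value decomposition Y = Q Σ Rᵀ, where Q ∈ ℝ^{D×D} and R ∈ ℝ^{N×N} are orthogonal, Σ ∈ ℝ^{D×N} is rectangular-diagonal with singular values σ_1 ≥ σ_2 ≥ … ≥ 0 on its diagonal, and the top K+1 singular values are strictly separated: σ_1 > σ_2 > … > σ_K > σ_{K+1} ≥ 0 (with σ_{K+1} = 0 if K = min(D,N)). Let p be a probability mass function on {1,…,K} with p(b) > 0 for all b. Then every global minimizer (X*, Γ*) ∈ ℝ^{K×N} × ℝ^{D×K} of the nested dropout cost C(X,Γ) = Σ_{b=1}^{K} p(b)·‖Y − Γ^{(b)} X^{(b)}‖_F² is of the form X* = T Σ_K Rᵀ and Γ* = Q_K T⁻¹, where Σ_K ∈ ℝ^{K×N} consists of the first K rows of Σ, Q_K ∈ ℝ^{D×K} consists of the first K columns of Q, and T ∈ ℝ^{K×K} is some matrix that is commutative in its truncation and inversion. -/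
/-!
For each truncation level `b`, the `b`-th term of the cost is `‖Y - M‖²` with `rank M ≤ b`, so
by Eckart–Young it is at least `∑_{i ≥ b} σᵢ²`, and the pair `(Σ_K Rᵀ, Q_K)` attains all these
bounds at once. As every weight `p b` is positive, a global minimizer attains each of them, and
the strict gaps between the top singular values force `Γ⁽ᵇ⁾ X⁽ᵇ⁾` to be the rank-`b` truncated SVD
of `Y` for every `b`. At `b = K` this gives `Γ* = Q_K C` and `X* = C⁻¹ Σ_K Rᵀ` with `C` invertible;
comparing the truncations then shows that `C` commutes with every leading coordinate projection,
so `C` is diagonal, and invertible diagonal matrices commute with truncation and inversion.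

Eckart–Young itself is proved by projecting orthogonally onto the column space of `M`: Pythagoras
reduces it to bounding `tr (P Y Yᵀ)`, and in the eigenbasis of `Y Yᵀ` the diagonal of `P` lies in
`[0, 1]` and sums to `rank M`, which is Ky Fan's maximum principle.
-/

open Matrix BigOperators

open Finset

section Frobenius

variable {l m n : Type*} [Fintype l] [Fintype m] [Fintype n]

noncomputable def frobSq (A : Matrix m n ℝ) : ℝ := ∑ i, ∑ j, A i j ^ 2

lemma frobSq_nonneg (A : Matrix m n ℝ) : 0 ≤ frobSq A := by
  unfold frobSq; positivity

lemma frobSq_eq_trace (A : Matrix m n ℝ) : frobSq A = (Aᵀ * A).trace := by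
  rw [frobSq, trace, Finset.sum_comm]
  simp [mul_apply, sq]

lemma frobSq_eq_zero_iff {A : Matrix m n ℝ} : frobSq A = 0 ↔ A = 0 := by
  rw [frobSq_eq_trace, ← conjTranspose_eq_transpose_of_trivial,
    trace_conjTranspose_mul_self_eq_zero_iff]

lemma frobSq_eq_trace_mul_transpose (A : Matrix m n ℝ) : frobSq A = (A * Aᵀ).trace := by
  simp [frobSq, trace, mul_apply, sq]

lemma frobSq_add (A B : Matrix m n ℝ) :
    frobSq (A + B) = frobSq A + frobSq B + 2 * (Aᵀ * B).trace := by
  have hBA : (Bᵀ * A).trace = (Aᵀ * B).trace := by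
    rw [← trace_transpose, transpose_mul, transpose_transpose]
  simp only [frobSq_eq_trace, transpose_add, Matrix.add_mul, Matrix.mul_add, trace_add, hBA]
  ring

lemma frobSq_mul_of_transpose_mul_eq_one [DecidableEq m] {Q : Matrix l m ℝ} (hQ : Qᵀ * Q = 1)
    (A : Matrix m n ℝ) : frobSq (Q * A) = frobSq A := by
  rw [frobSq_eq_trace, frobSq_eq_trace, transpose_mul, Matrix.mul_assoc,
    ← Matrix.mul_assoc Qᵀ, hQ, Matrix.one_mul]

variable {P : Matrix m m ℝ}

lemma frobSq_sub_eq_of_proj (hPt : Pᵀ = P) (hPP : P * P = P) (Y : Matrix m n ℝ)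
    {M : Matrix m n ℝ} (hPM : P * M = M) :
    frobSq (Y - M) = frobSq (P * Y - M) + frobSq (Y - P * Y) := by
  have hcross : (P * Y - M)ᵀ * (Y - P * Y) = 0 := by
    have hfix : P * Y - M = P * (P * Y - M) := by
      rw [Matrix.mul_sub, ← Matrix.mul_assoc, hPP, hPM]
    rw [hfix, transpose_mul, hPt, Matrix.mul_assoc, Matrix.mul_sub, ← Matrix.mul_assoc P P, hPP,
      sub_self, Matrix.mul_zero]
  rw [show Y - M = (P * Y - M) + (Y - P * Y) by abel, frobSq_add, hcross, trace_zero]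
  ring

lemma frobSq_sub_proj_mul [DecidableEq m] (hPt : Pᵀ = P) (hPP : P * P = P) (Y : Matrix m n ℝ) :
    frobSq (Y - P * Y) = ((1 - P) * (Y * Yᵀ)).trace := by
  have hidem : (1 - P)ᵀ * (1 - P) = 1 - P := by
    rw [transpose_sub, transpose_one, hPt, Matrix.sub_mul, Matrix.mul_sub, Matrix.mul_sub, hPP]
    simp
  rw [show Y - P * Y = (1 - P) * Y by rw [Matrix.sub_mul, Matrix.one_mul],
    frobSq_eq_trace_mul_transpose, transpose_mul, ← Matrix.mul_assoc, trace_mul_cycle,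
    ← Matrix.mul_assoc, hidem, Matrix.mul_assoc]

end Frobenius

section Majorization

variable {ι : Type*} [DecidableEq ι] {S : Finset ι} {μ h : ι → ℝ} {c : ℝ}

lemma ite_mul_sub_nonneg (hS : ∀ i ∈ S, c ≤ μ i) (hSc : ∀ i ∉ S, μ i ≤ c)
    (h0 : ∀ i, 0 ≤ h i) (h1 : ∀ i, h i ≤ 1) (i : ι) :
    0 ≤ if i ∈ S then (μ i - c) * (1 - h i) else (c - μ i) * h i := by
  split_ifs with hi
  · exact mul_nonneg (sub_nonneg.2 (hS i hi)) (sub_nonneg.2 (h1 i))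
  · exact mul_nonneg (sub_nonneg.2 (hSc i hi)) (h0 i)

variable [Fintype ι]

lemma sum_sub_sum_mul_eq (c : ℝ) :
    ∑ i ∈ S, μ i - ∑ i, μ i * h i =
      ∑ i, (if i ∈ S then (μ i - c) * (1 - h i) else (c - μ i) * h i) +
        c * (#S - ∑ i, h i) := by
  have hS : ∑ i ∈ S, μ i = ∑ i, if i ∈ S then μ i else 0 := by
    rw [Finset.sum_ite_mem, univ_inter]
  have hcard : (#S : ℝ) = ∑ i, if i ∈ S then 1 else 0 := by
    rw [Finset.sum_ite_mem, univ_inter, sum_const, nsmul_one]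
  rw [hS, hcard, _root_.mul_sub, Finset.mul_sum, Finset.mul_sum, ← Finset.sum_sub_distrib,
    ← Finset.sum_sub_distrib, ← Finset.sum_add_distrib]
  refine Finset.sum_congr rfl fun i _ => ?_
  split_ifs <;> ring

/-- Ky Fan's maximum principle, for the diagonal `h` of an orthogonal projection of rank at
most `#S`. -/
lemma sum_mul_le_sum_of_mem (hc : 0 ≤ c) (hS : ∀ i ∈ S, c ≤ μ i) (hSc : ∀ i ∉ S, μ i ≤ c)
    (h0 : ∀ i, 0 ≤ h i) (h1 : ∀ i, h i ≤ 1) (hsum : ∑ i, h i ≤ #S) :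
    ∑ i, μ i * h i ≤ ∑ i ∈ S, μ i := by
  have hid := sum_sub_sum_mul_eq (S := S) (μ := μ) (h := h) c
  have := Finset.sum_nonneg fun i (_ : i ∈ univ) => ite_mul_sub_nonneg hS hSc h0 h1 i
  nlinarith [mul_nonneg hc (sub_nonneg.2 hsum)]

lemma eq_ite_of_sum_mul_eq (hc : 0 ≤ c) (hS : ∀ i ∈ S, c < μ i) (hSc : ∀ i ∉ S, μ i ≤ c)
    (h0 : ∀ i, 0 ≤ h i) (h1 : ∀ i, h i ≤ 1) (hsum : ∑ i, h i ≤ #S)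
    (heq : ∑ i, μ i * h i = ∑ i ∈ S, μ i) (i : ι) : h i = if i ∈ S then 1 else 0 := by
  have hterm := ite_mul_sub_nonneg (fun i hi => (hS i hi).le) hSc h0 h1
  have hid := sum_sub_sum_mul_eq (S := S) (μ := μ) (h := h) c
  have hzero : ∑ i, (if i ∈ S then (μ i - c) * (1 - h i) else (c - μ i) * h i) = 0 := by
    nlinarith [Finset.sum_nonneg fun i (_ : i ∈ univ) => hterm i,
      mul_nonneg hc (sub_nonneg.2 hsum)]
  have hone : ∀ i ∈ S, h i = 1 := by
    intro i hi
    have := (Finset.sum_eq_zero_iff_of_nonneg fun i _ => hterm i).1 hzero i (mem_univ i)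
    rw [if_pos hi] at this
    linarith [(mul_eq_zero.1 this).resolve_left (sub_ne_zero.2 (hS i hi).ne')]
  have hcompl : ∑ i ∈ Sᶜ, h i = 0 := by
    refine le_antisymm ?_ (Finset.sum_nonneg fun i _ => h0 i)
    rw [← Finset.sum_add_sum_compl S, Finset.sum_congr rfl hone, sum_const, nsmul_one] at hsum
    linarith
  split_ifs with hi
  · exact hone i hi
  · exact (Finset.sum_eq_zero_iff_of_nonneg fun i _ => h0 i).1 hcompl i (mem_compl.2 hi)

end Majorization

lemma exists_proj_colSpace {m n : Type*} [Fintype m] [Fintype n] (A : Matrix m n ℝ) :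
    ∃ P : Matrix m m ℝ, Pᵀ = P ∧ P * P = P ∧ P.trace = A.rank ∧ P * A = A := by
  let V : Submodule ℝ (EuclideanSpace ℝ m) :=
    (Submodule.span ℝ (Set.range A.col)).map
      ((WithLp.linearEquiv 2 ℝ (m → ℝ)).symm : (m → ℝ) →ₗ[ℝ] EuclideanSpace ℝ m)
  let u := stdOrthonormalBasis ℝ V
  let U : Matrix (Fin (Module.finrank ℝ V)) m ℝ := of fun k i => (u k : EuclideanSpace ℝ m) i
  have hinner : ∀ k (x : V), ∑ i, U k i * x.1 i = inner ℝ (u k) x := by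
    intro k x
    simp [U, PiLp.inner_apply, mul_comm]
  have hUU : U * Uᵀ = 1 := by
    ext k l
    rw [mul_apply, one_apply, ← orthonormal_iff_ite.1 u.orthonormal k l, ← hinner]
    rfl
  refine ⟨Uᵀ * U, by simp, by rw [Matrix.mul_assoc, ← Matrix.mul_assoc U, hUU, Matrix.one_mul],
    ?_, ?_⟩
  · rw [trace_mul_comm, hUU, trace_one, Fintype.card_fin, rank_eq_finrank_span_cols,
      LinearEquiv.finrank_map_eq]
  · ext i j
    let x : V :=
      ⟨WithLp.toLp 2 (A.col j), Submodule.mem_map_of_mem (Submodule.subset_span ⟨j, rfl⟩)⟩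
    have hrepr := congrArg (fun y : V => (y : EuclideanSpace ℝ m) i) (u.sum_repr' x)
    simp only [Submodule.coe_sum, Submodule.coe_smul, WithLp.ofLp_sum, WithLp.ofLp_smul,
      Finset.sum_apply, Pi.smul_apply, smul_eq_mul] at hrepr
    have hx : ∀ k, (U * A) k j = inner ℝ (u k) x := fun k => hinner k x
    rw [Matrix.mul_assoc, mul_apply]
    simp_rw [hx]
    refine Eq.trans ?_ hrepr
    simp [U, mul_comm]

section SymmetricIdempotent

variable {m : Type*} [Fintype m] [DecidableEq m] {P : Matrix m m ℝ}

lemma diag_sub_sq_eq_sum (hPt : Pᵀ = P) (hPP : P * P = P) (i : m) :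
    P i i - P i i ^ 2 = ∑ j ∈ univ.erase i, P i j ^ 2 := by
  have h := congrFun (congrFun hPP i) i
  rw [mul_apply] at h
  rw [← Finset.add_sum_erase _ _ (mem_univ i)] at h
  have hsym : ∀ j, P j i = P i j := fun j => congrFun (congrFun hPt i) j
  simp only [hsym, ← sq] at h
  linarith

lemma diag_nonneg_of_idempotent (hPt : Pᵀ = P) (hPP : P * P = P) (i : m) : 0 ≤ P i i := by
  nlinarith [diag_sub_sq_eq_sum hPt hPP i, Finset.sum_nonneg fun j (_ : j ∈ univ.erase i) =>
    sq_nonneg (P i j)]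

lemma diag_le_one_of_idempotent (hPt : Pᵀ = P) (hPP : P * P = P) (i : m) : P i i ≤ 1 := by
  nlinarith [diag_sub_sq_eq_sum hPt hPP i, Finset.sum_nonneg fun j (_ : j ∈ univ.erase i) =>
    sq_nonneg (P i j)]

lemma eq_diagonal_of_idempotent (hPt : Pᵀ = P) (hPP : P * P = P)
    (h01 : ∀ i, P i i = 0 ∨ P i i = 1) : P = diagonal P.diag := by
  ext i j
  rcases eq_or_ne i j with rfl | hij
  · simp
  rw [diagonal_apply_ne _ hij]
  have h := diag_sub_sq_eq_sum hPt hPP i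
  have hle := Finset.single_le_sum (fun k _ => sq_nonneg (P i k))
    (mem_erase.2 ⟨hij.symm, mem_univ j⟩)
  rcases h01 i with h0 | h0 <;> rw [h0] at h <;> nlinarith

end SymmetricIdempotent

section EckartYoung

variable {m n : Type*} [DecidableEq m]

def coordProj (S : Finset m) : Matrix m m ℝ := diagonal fun i => if i ∈ S then 1 else 0

lemma transpose_coordProj (S : Finset m) : (coordProj S)ᵀ = coordProj S := diagonal_transpose _

variable [Fintype m] [Fintype n]

lemma coordProj_mul_self (S : Finset m) : coordProj S * coordProj S = coordProj S := by
  simp [coordProj, diagonal_mul_diagonal]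

lemma rank_coordProj (S : Finset m) : (coordProj S).rank = #S := by
  simp [coordProj, rank_diagonal]

variable {Y M : Matrix m n ℝ} {μ : m → ℝ}

lemma frobSq_sub_eq_add_sum_diag (hY : Y * Yᵀ = diagonal μ) {P : Matrix m m ℝ}
    (hPt : Pᵀ = P) (hPP : P * P = P) (hPM : P * M = M) :
    frobSq (Y - M) = frobSq (P * Y - M) + ∑ i, μ i * (1 - P i i) := by
  rw [frobSq_sub_eq_of_proj hPt hPP Y hPM, frobSq_sub_proj_mul hPt hPP, hY, trace]
  simp [mul_diagonal, mul_comm]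

lemma frobSq_sub_coordProj_mul (hY : Y * Yᵀ = diagonal μ) (S : Finset m) :
    frobSq (Y - coordProj S * Y) = ∑ i ∈ Sᶜ, μ i := by
  rw [frobSq_sub_eq_add_sum_diag hY (transpose_coordProj S) (coordProj_mul_self S)
    (M := coordProj S * Y) (by rw [← Matrix.mul_assoc, coordProj_mul_self]), sub_self,
    ← univ_inter Sᶜ, ← Finset.sum_ite_mem univ Sᶜ μ, frobSq_eq_zero_iff.2 rfl, zero_add]
  refine Finset.sum_congr rfl fun i _ => ?_
  by_cases hi : i ∈ S <;> simp [hi, coordProj]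

variable {S : Finset m} {c : ℝ}

/-- Eckart–Young, in coordinates where the rows of `Y` are orthogonal. -/
lemma sum_compl_le_frobSq_sub (hY : Y * Yᵀ = diagonal μ) (hc : 0 ≤ c)
    (hS : ∀ i ∈ S, c ≤ μ i) (hSc : ∀ i ∉ S, μ i ≤ c) (hM : M.rank ≤ #S) :
    ∑ i ∈ Sᶜ, μ i ≤ frobSq (Y - M) := by
  obtain ⟨P, hPt, hPP, hPr, hPM⟩ := exists_proj_colSpace M
  have htr : ∑ i, P i i ≤ #S := by
    change P.trace ≤ _
    rw [hPr]
    exact_mod_cast hM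
  have hmaj := sum_mul_le_sum_of_mem hc hS hSc (diag_nonneg_of_idempotent hPt hPP)
    (diag_le_one_of_idempotent hPt hPP) htr
  have := frobSq_nonneg (P * Y - M)
  have hcompl := Finset.sum_add_sum_compl S μ
  rw [frobSq_sub_eq_add_sum_diag hY hPt hPP hPM]
  simp only [_root_.mul_sub, mul_one, Finset.sum_sub_distrib]
  linarith

lemma eq_coordProj_mul_of_frobSq_sub_eq (hY : Y * Yᵀ = diagonal μ) (hc : 0 ≤ c)
    (hS : ∀ i ∈ S, c < μ i) (hSc : ∀ i ∉ S, μ i ≤ c) (hM : M.rank ≤ #S)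
    (heq : frobSq (Y - M) = ∑ i ∈ Sᶜ, μ i) : M = coordProj S * Y := by
  obtain ⟨P, hPt, hPP, hPr, hPM⟩ := exists_proj_colSpace M
  have h0 := diag_nonneg_of_idempotent hPt hPP
  have h1 := diag_le_one_of_idempotent hPt hPP
  have htr : ∑ i, P i i ≤ #S := by
    change P.trace ≤ _
    rw [hPr]
    exact_mod_cast hM
  have hmaj := sum_mul_le_sum_of_mem hc (fun i hi => (hS i hi).le) hSc h0 h1 htr
  have := frobSq_nonneg (P * Y - M)
  have hcompl := Finset.sum_add_sum_compl S μ
  rw [frobSq_sub_eq_add_sum_diag hY hPt hPP hPM] at heq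
  simp only [_root_.mul_sub, mul_one, Finset.sum_sub_distrib] at heq
  have hPYM : frobSq (P * Y - M) = 0 := by linarith
  have hdiag := eq_ite_of_sum_mul_eq hc hS hSc h0 h1 htr (by linarith)
  have hP : P = coordProj S := by
    rw [eq_diagonal_of_idempotent hPt hPP fun i => by rw [hdiag i]; split_ifs <;> simp,
      coordProj]
    exact congrArg diagonal (funext hdiag)
  rw [← hP, eq_comm, ← sub_eq_zero, ← frobSq_eq_zero_iff, hPYM]

end EckartYoung

section Orthogonal

variable {m n : Type*} [Fintype m] [DecidableEq m] [Fintype n] {Q : Matrix m m ℝ}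
  {Y M : Matrix m n ℝ} {μ : m → ℝ} {S : Finset m} {c : ℝ}

lemma transpose_mul_mul_transpose_eq (hQ : Qᵀ * Q = 1) (hY : Y * Yᵀ = Q * diagonal μ * Qᵀ) :
    Qᵀ * Y * (Qᵀ * Y)ᵀ = diagonal μ := by
  rw [transpose_mul, transpose_transpose, Matrix.mul_assoc, ← Matrix.mul_assoc Y, hY]
  simp only [Matrix.mul_assoc]
  rw [hQ, Matrix.mul_one, ← Matrix.mul_assoc, hQ, Matrix.one_mul]

lemma frobSq_transpose_mul (hQ : Qᵀ * Q = 1) (A : Matrix m n ℝ) : frobSq (Qᵀ * A) = frobSq A :=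
  frobSq_mul_of_transpose_mul_eq_one (by rw [transpose_transpose, mul_eq_one_comm.1 hQ]) A

lemma frobSq_sub_conj_coordProj_mul (hQ : Qᵀ * Q = 1) (hY : Y * Yᵀ = Q * diagonal μ * Qᵀ)
    (S : Finset m) : frobSq (Y - Q * coordProj S * Qᵀ * Y) = ∑ i ∈ Sᶜ, μ i := by
  rw [← frobSq_transpose_mul hQ, Matrix.mul_sub, Matrix.mul_assoc, Matrix.mul_assoc,
    ← Matrix.mul_assoc Qᵀ, hQ, Matrix.one_mul]
  exact frobSq_sub_coordProj_mul (transpose_mul_mul_transpose_eq hQ hY) S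

lemma sum_compl_le_frobSq_sub_of_orthogonal (hQ : Qᵀ * Q = 1)
    (hY : Y * Yᵀ = Q * diagonal μ * Qᵀ) (hc : 0 ≤ c) (hS : ∀ i ∈ S, c ≤ μ i)
    (hSc : ∀ i ∉ S, μ i ≤ c) (hM : M.rank ≤ #S) : ∑ i ∈ Sᶜ, μ i ≤ frobSq (Y - M) := by
  rw [← frobSq_transpose_mul hQ, Matrix.mul_sub]
  exact sum_compl_le_frobSq_sub (transpose_mul_mul_transpose_eq hQ hY) hc hS hSc
    ((rank_mul_le_right _ _).trans hM)

lemma eq_conj_coordProj_mul_of_frobSq_sub_eq (hQ : Qᵀ * Q = 1)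
    (hY : Y * Yᵀ = Q * diagonal μ * Qᵀ) (hc : 0 ≤ c) (hS : ∀ i ∈ S, c < μ i)
    (hSc : ∀ i ∉ S, μ i ≤ c) (hM : M.rank ≤ #S) (heq : frobSq (Y - M) = ∑ i ∈ Sᶜ, μ i) :
    M = Q * coordProj S * Qᵀ * Y := by
  rw [← frobSq_transpose_mul hQ, Matrix.mul_sub] at heq
  have h := eq_coordProj_mul_of_frobSq_sub_eq (transpose_mul_mul_transpose_eq hQ hY) hc hS hSc
    ((rank_mul_le_right _ _).trans hM) heq
  rw [Matrix.mul_assoc, Matrix.mul_assoc, ← h, ← Matrix.mul_assoc, mul_eq_one_comm.1 hQ,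
    Matrix.one_mul]

lemma transpose_mul_submatrix_eq_one {k : Type*} [DecidableEq k] (hQ : Qᵀ * Q = 1) {e : k → m}
    (he : Function.Injective e) : (Q.submatrix id e)ᵀ * Q.submatrix id e = 1 := by
  rw [transpose_submatrix, ← submatrix_mul _ _ _ _ _ Function.bijective_id, hQ, submatrix_one _ he]

end Orthogonal

lemma mul_transpose_mul_transpose_of_orthogonal {l m n : Type*} [Fintype l] [Fintype n]
    [DecidableEq n] {R : Matrix l n ℝ} (hR : Rᵀ * R = 1) (A : Matrix m n ℝ) :
    A * Rᵀ * (A * Rᵀ)ᵀ = A * Aᵀ := by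
  rw [transpose_mul, transpose_transpose, Matrix.mul_assoc, ← Matrix.mul_assoc Rᵀ, hR,
    Matrix.one_mul]

lemma eq_of_sum_mul_le_of_le {ι : Type*} [Fintype ι] {p f g : ι → ℝ} (hp : ∀ i, 0 < p i)
    (hgf : ∀ i, g i ≤ f i) (h : ∑ i, p i * f i ≤ ∑ i, p i * g i) (i : ι) : f i = g i := by
  have hle : ∀ i ∈ univ, p i * g i ≤ p i * f i :=
    fun i _ => mul_le_mul_of_nonneg_left (hgf i) (hp i).le
  have := (Finset.sum_eq_sum_iff_of_le hle).1 (le_antisymm (Finset.sum_le_sum hle) h) i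
    (mem_univ i)
  exact (mul_left_cancel₀ (hp i).ne' this).symm

section Truncation

def truncSet (n b : ℕ) : Finset (Fin n) := {i | (i : ℕ) < b}

/-- `G * truncId K b * X` is the paper's `Γ⁽ᵇ⁾ X⁽ᵇ⁾`. -/
def truncId (n b : ℕ) : Matrix (Fin n) (Fin n) ℝ := coordProj (truncSet n b)

@[simp]
lemma mem_truncSet {n b : ℕ} {i : Fin n} : i ∈ truncSet n b ↔ (i : ℕ) < b := by
  simp [truncSet]

lemma card_truncSet {n b : ℕ} (hb : b ≤ n) : #(truncSet n b) = b := by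
  simp [truncSet, Fin.card_filter_val_lt, hb]

lemma truncId_self (n : ℕ) : truncId n n = 1 := by
  simp [truncId, truncSet, coordProj]

lemma truncCost_eq_frobSq {D N K : ℕ} (Y : Matrix (Fin D) (Fin N) ℝ)
    (X : Matrix (Fin K) (Fin N) ℝ) (G : Matrix (Fin D) (Fin K) ℝ) (b : ℕ) :
    truncCost Y X G b = frobSq (Y - G * truncId K b * X) := by
  refine Finset.sum_congr rfl fun i _ => Finset.sum_congr rfl fun j _ => ?_
  rw [Matrix.sub_apply, mul_apply]
  congr 2
  refine Finset.sum_congr rfl fun k _ => ?_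
  rw [truncId, coordProj, mul_diagonal]
  by_cases hk : (k : ℕ) < b <;> simp [hk]

lemma rank_mul_truncId_mul_le {D N K b : ℕ} (hb : b ≤ K) (X : Matrix (Fin K) (Fin N) ℝ)
    (G : Matrix (Fin D) (Fin K) ℝ) : (G * truncId K b * X).rank ≤ b := by
  calc (G * truncId K b * X).rank ≤ (truncId K b).rank :=
        (rank_mul_le_left _ _).trans (rank_mul_le_right _ _)
    _ = b := by rw [truncId, rank_coordProj, card_truncSet hb]

lemma sum_castLE_eq_sum {K D : ℕ} (h : K ≤ D) {f : Fin D → ℝ} (hf : ∀ i : Fin D, K ≤ i → f i = 0) :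
    ∑ k : Fin K, f (Fin.castLE h k) = ∑ i, f i := by
  refine (Finset.sum_map univ (Fin.castLEEmb h) f).symm.trans
    (Finset.sum_subset (subset_univ _) fun i _ hi => hf i ?_)
  by_contra! hlt
  exact hi (mem_map.2 ⟨⟨i, hlt⟩, mem_univ _, Fin.ext rfl⟩)

lemma submatrix_castLE_mul_truncId_mul {α β : Type*} {K D b : ℕ} (h : K ≤ D) (hb : b ≤ K)
    (A : Matrix α (Fin D) ℝ) (B : Matrix (Fin D) β ℝ) :
    A.submatrix id (Fin.castLE h) * truncId K b * B.submatrix (Fin.castLE h) id =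
      A * truncId D b * B := by
  ext i j
  rw [mul_apply, mul_apply, ← sum_castLE_eq_sum h]
  · refine Finset.sum_congr rfl fun k _ => ?_
    simp [truncId, coordProj, mul_diagonal]
  · intro l hl
    simp [truncId, coordProj, mul_diagonal, not_lt.2 (hb.trans hl)]

end Truncation

section SingularValues

variable {s : ℕ → ℝ}

lemma mul_transpose_eq_diagonal_of_rectDiag {D N : ℕ} {Sig : Matrix (Fin D) (Fin N) ℝ}
    (hSig : ∀ (i : Fin D) (j : Fin N), Sig i j = if (i : ℕ) = (j : ℕ) then s i else 0)
    (hzero : ∀ i, min D N ≤ i → s i = 0) :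
    Sig * Sigᵀ = diagonal fun i : Fin D => s i ^ 2 := by
  ext i i'
  simp only [mul_apply, transpose_apply, hSig]
  rcases eq_or_ne i i' with rfl | hii'
  · rw [diagonal_apply_eq]
    by_cases hiN : (i : ℕ) < N
    · have hj : ∀ j : Fin N, j ≠ ⟨i, hiN⟩ → (i : ℕ) ≠ j := fun j hj h => hj (Fin.ext h.symm)
      rw [Finset.sum_eq_single ⟨i, hiN⟩ (fun j _ hji => by simp [hj j hji]) (by simp)]
      simp [sq]
    · simp [hzero i (by omega)]
  · rw [diagonal_apply_ne _ hii']
    refine Finset.sum_eq_zero fun j _ => ?_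
    split_ifs with h1 h2 <;> simp_all [Fin.ext_iff]

lemma singularValue_sq_le_of_not_mem (hsnn : ∀ i, 0 ≤ s i) (hmono : ∀ i, s (i + 1) ≤ s i)
    {n b : ℕ} {i : Fin n} (hi : i ∉ truncSet n b) : s i ^ 2 ≤ s b ^ 2 :=
  pow_le_pow_left₀ (hsnn i) (antitone_nat_of_succ_le hmono (not_lt.1 (mem_truncSet.not.1 hi))) 2

lemma singularValue_sq_lt_of_mem {K : ℕ} (hsnn : ∀ i, 0 ≤ s i) (hmono : ∀ i, s (i + 1) ≤ s i)
    (hstrict : ∀ i, i < K → s (i + 1) < s i) {n b : ℕ} {i : Fin n} (hi : i ∈ truncSet n b)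
    (hbK : b ≤ K) : s b ^ 2 < s i ^ 2 := by
  rw [mem_truncSet] at hi
  exact pow_lt_pow_left₀ ((antitone_nat_of_succ_le hmono hi).trans_lt
    (hstrict i (hi.trans_le hbK))) (hsnn b) two_ne_zero

end SingularValues

lemma mul_truncId_mul_eq_of_ndCost_le {D N K : ℕ} (hKD : K ≤ D) {Y : Matrix (Fin D) (Fin N) ℝ}
    {Q : Matrix (Fin D) (Fin D) ℝ} {s : ℕ → ℝ} (hQ : Qᵀ * Q = 1)
    (hY : Y * Yᵀ = Q * diagonal (fun i : Fin D => s i ^ 2) * Qᵀ) (hsnn : ∀ i, 0 ≤ s i)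
    (hmono : ∀ i, s (i + 1) ≤ s i) (hstrict : ∀ i, i < K → s (i + 1) < s i)
    {p : Fin K → ℝ} (hp : ∀ b, 0 < p b) {X₀ Xs : Matrix (Fin K) (Fin N) ℝ}
    {G₀ Gs : Matrix (Fin D) (Fin K) ℝ}
    (h₀ : ∀ b ≤ K, G₀ * truncId K b * X₀ = Q * truncId D b * Qᵀ * Y)
    (hmin : ndCost Y p Xs Gs ≤ ndCost Y p X₀ G₀) (b : Fin K) :
    Gs * truncId K (b + 1) * Xs = Q * truncId D (b + 1) * Qᵀ * Y := by
  have hrank : ∀ b ≤ K, ∀ (X : Matrix (Fin K) (Fin N) ℝ) (G : Matrix (Fin D) (Fin K) ℝ),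
      (G * truncId K b * X).rank ≤ #(truncSet D b) := fun b hb X G => by
    rw [card_truncSet (hb.trans hKD)]
    exact rank_mul_truncId_mul_le hb X G
  have hlow : ∀ b ≤ K, ∀ (X : Matrix (Fin K) (Fin N) ℝ) (G : Matrix (Fin D) (Fin K) ℝ),
      ∑ i ∈ (truncSet D b)ᶜ, s i ^ 2 ≤ truncCost Y X G b :=
    fun b hb X G => by
      rw [truncCost_eq_frobSq]
      exact sum_compl_le_frobSq_sub_of_orthogonal hQ hY (sq_nonneg (s b))
        (fun i hi => (singularValue_sq_lt_of_mem hsnn hmono hstrict hi hb).le)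
        (fun i hi => singularValue_sq_le_of_not_mem hsnn hmono hi) (hrank b hb X G)
  have hcand : ∀ b ≤ K, truncCost Y X₀ G₀ b = ∑ i ∈ (truncSet D b)ᶜ, s i ^ 2 := fun b hb => by
    rw [truncCost_eq_frobSq, h₀ b hb, truncId, frobSq_sub_conj_coordProj_mul hQ hY]
  have hopt := eq_of_sum_mul_le_of_le hp (fun b => hlow _ b.isLt Xs Gs)
    (by simpa only [ndCost, hcand _ (Fin.isLt _)] using hmin) b
  have hb : (b : ℕ) + 1 ≤ K := b.isLt
  rw [truncCost_eq_frobSq] at hopt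
  exact eq_conj_coordProj_mul_of_frobSq_sub_eq hQ hY (sq_nonneg (s (b + 1)))
    (fun i hi => singularValue_sq_lt_of_mem hsnn hmono hstrict hi hb)
    (fun i hi => singularValue_sq_le_of_not_mem hsnn hmono hi) (hrank _ hb _ _) hopt

section Factorization

variable {R : Type*} [CommRing R] {k m n : Type*} [Fintype k] [DecidableEq k] [Fintype m]
  [Fintype n] {U : Matrix m k R} {S : Matrix k n R}

lemma mul_eq_one_of_isUnit_mul_transpose (hS : IsUnit (S * Sᵀ)) :
    S * (Sᵀ * (S * Sᵀ)⁻¹) = 1 := by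
  rw [← Matrix.mul_assoc, mul_nonsing_inv _ ((isUnit_iff_isUnit_det _).1 hS)]

lemma eq_of_mul_mul_eq (hU : Uᵀ * U = 1) (hS : IsUnit (S * Sᵀ)) {A B : Matrix k k R}
    (h : U * A * S = U * B * S) : A = B := by
  have hcancel : ∀ A : Matrix k k R, Uᵀ * (U * A * S) * (Sᵀ * (S * Sᵀ)⁻¹) = A := fun A =>
    calc Uᵀ * (U * A * S) * (Sᵀ * (S * Sᵀ)⁻¹) = Uᵀ * U * A * (S * (Sᵀ * (S * Sᵀ)⁻¹)) := by
          simp only [Matrix.mul_assoc]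
      _ = A := by rw [hU, mul_eq_one_of_isUnit_mul_transpose hS, Matrix.one_mul, Matrix.mul_one]
  rw [← hcancel A, h, hcancel]

lemma exists_eq_mul_of_mul_eq (hU : Uᵀ * U = 1) (hS : IsUnit (S * Sᵀ)) {G : Matrix m k R}
    {X : Matrix k n R} (h : G * X = U * S) :
    ∃ C : Matrix k k R, IsUnit C ∧ G = U * C ∧ X = C⁻¹ * S := by
  have hSS := mul_eq_one_of_isUnit_mul_transpose hS
  have hCX : Uᵀ * G * X = S := by rw [Matrix.mul_assoc, h, ← Matrix.mul_assoc, hU, Matrix.one_mul]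
  have hinv : Uᵀ * G * (X * (Sᵀ * (S * Sᵀ)⁻¹)) = 1 := by rw [← Matrix.mul_assoc, hCX, hSS]
  have hdet := isUnit_det_of_right_inverse hinv
  refine ⟨Uᵀ * G, (isUnit_iff_isUnit_det _).2 hdet, ?_, ?_⟩
  · calc G = G * ((Uᵀ * G)⁻¹ * (Uᵀ * G)) := by rw [nonsing_inv_mul _ hdet, Matrix.mul_one]
      _ = G * X * (Sᵀ * (S * Sᵀ)⁻¹) * (Uᵀ * G) := by
        rw [inv_eq_right_inv hinv]; simp only [Matrix.mul_assoc]
      _ = U * (Uᵀ * G) := by rw [h, Matrix.mul_assoc U, hSS, Matrix.mul_one]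
  · rw [← hCX, ← Matrix.mul_assoc, nonsing_inv_mul _ hdet, Matrix.one_mul]

end Factorization

lemma eq_diagonal_of_commute_truncId {K : ℕ} {C : Matrix (Fin K) (Fin K) ℝ}
    (h : ∀ b : Fin K, C * truncId K (b + 1) = truncId K (b + 1) * C) : C = diagonal C.diag := by
  ext i j
  rcases eq_or_ne i j with rfl | hij
  · simp
  rw [diagonal_apply_ne _ hij]
  rcases lt_or_gt_of_ne hij with hlt | hgt
  · simpa [truncId, coordProj, mul_diagonal, diagonal_mul, hlt, eq_comm]
      using congrFun (congrFun (h i) i) j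
  · simpa [truncId, coordProj, mul_diagonal, diagonal_mul, hgt]
      using congrFun (congrFun (h j) i) j

lemma leadMinor_diagonal {K b : ℕ} (h : b ≤ K) (w : Fin K → ℝ) :
    leadMinor (diagonal w) b h = diagonal (w ∘ Fin.castLE h) :=
  submatrix_diagonal w _ (Fin.castLE_injective h)

lemma inv_diagonal_of_ne_zero {n : Type*} [Fintype n] [DecidableEq n] {w : n → ℝ}
    (hw : ∀ i, w i ≠ 0) : (diagonal w)⁻¹ = diagonal w⁻¹ :=
  inv_eq_right_inv (by rw [diagonal_mul_diagonal]; simp [hw])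

lemma isUnit_diagonal_of_ne_zero {n : Type*} [Fintype n] [DecidableEq n] {w : n → ℝ}
    (hw : ∀ i, w i ≠ 0) : IsUnit (diagonal w) :=
  isUnit_diagonal.2 (Pi.isUnit_iff.2 fun i => (hw i).isUnit)

lemma commTruncInv_diagonal {K : ℕ} {w : Fin K → ℝ} (hw : ∀ k, w k ≠ 0) :
    CommTruncInv (diagonal w) := by
  refine ⟨isUnit_diagonal_of_ne_zero hw, fun b h _ => ⟨?_, ?_⟩⟩
  · rw [leadMinor_diagonal]
    exact isUnit_diagonal_of_ne_zero fun k => hw _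
  · rw [inv_diagonal_of_ne_zero hw, leadMinor_diagonal, leadMinor_diagonal,
      inv_diagonal_of_ne_zero (w := w ∘ Fin.castLE h) fun k => hw _]
    rfl

lemma exists_commTruncInv_of_mul_truncId_mul_eq {m n : Type*} [Fintype m] [Fintype n] {K : ℕ}
    (hK : 1 ≤ K) {U : Matrix m (Fin K) ℝ} {S : Matrix (Fin K) n ℝ} (hU : Uᵀ * U = 1)
    (hS : IsUnit (S * Sᵀ)) {G : Matrix m (Fin K) ℝ} {X : Matrix (Fin K) n ℝ}
    (h : ∀ b : Fin K, G * truncId K (b + 1) * X = U * truncId K (b + 1) * S) :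
    ∃ T : Matrix (Fin K) (Fin K) ℝ, CommTruncInv T ∧ X = T * S ∧ G = U * T⁻¹ := by
  obtain ⟨C, hC, rfl, rfl⟩ := exists_eq_mul_of_mul_eq hU hS (by
    simpa [show K - 1 + 1 = K by omega, truncId_self] using h ⟨K - 1, by omega⟩)
  have hCdet := (isUnit_iff_isUnit_det C).1 hC
  have hcomm : ∀ b : Fin K, C * truncId K (b + 1) = truncId K (b + 1) * C := fun b => by
    have hconj := eq_of_mul_mul_eq hU hS (A := C * truncId K (b + 1) * C⁻¹)
      (by simpa only [Matrix.mul_assoc] using h b)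
    calc C * truncId K (b + 1) = C * truncId K (b + 1) * C⁻¹ * C := by
          rw [Matrix.mul_assoc _ C⁻¹, nonsing_inv_mul _ hCdet, Matrix.mul_one]
      _ = truncId K (b + 1) * C := by rw [hconj]
  have hCd := eq_diagonal_of_commute_truncId hcomm
  have hd : ∀ k, C.diag k ≠ 0 := fun k =>
    (Pi.isUnit_iff.1 (isUnit_diagonal.1 (hCd ▸ hC)) k).ne_zero
  refine ⟨diagonal C.diag⁻¹, commTruncInv_diagonal fun k => inv_ne_zero (hd k), ?_, ?_⟩
  · rw [← inv_diagonal_of_ne_zero hd, ← hCd]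
  · rw [← inv_diagonal_of_ne_zero hd, ← hCd, nonsing_inv_nonsing_inv _ hCdet]

theorem nd_minimizer_form_general
    {D N K : ℕ} (hK : 1 ≤ K) (hKD : K ≤ D)
    (Y : Matrix (Fin D) (Fin N) ℝ)
    (Q : Matrix (Fin D) (Fin D) ℝ) (R : Matrix (Fin N) (Fin N) ℝ)
    (hQ : Qᵀ * Q = 1) (hR : Rᵀ * R = 1)
    (s : ℕ → ℝ) (Sig : Matrix (Fin D) (Fin N) ℝ)
    (hSig : ∀ (i : Fin D) (j : Fin N), Sig i j = if (i : ℕ) = (j : ℕ) then s (i : ℕ) else 0)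
    (hsnn : ∀ i, 0 ≤ s i)
    (hmono : ∀ i, s (i + 1) ≤ s i)
    (hzero : ∀ i, min D N ≤ i → s i = 0)
    (hstrict : ∀ i, i < K → s (i + 1) < s i)
    (hY : Y = Q * Sig * Rᵀ)
    (p : Fin K → ℝ) (hp : ∀ b, 0 < p b)
    (Xs : Matrix (Fin K) (Fin N) ℝ) (Gs : Matrix (Fin D) (Fin K) ℝ)
    (hmin : ∀ (X : Matrix (Fin K) (Fin N) ℝ) (G : Matrix (Fin D) (Fin K) ℝ),
      ndCost Y p Xs Gs ≤ ndCost Y p X G) :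
    ∃ T : Matrix (Fin K) (Fin K) ℝ, CommTruncInv T ∧
      Xs = T * (Sig.submatrix (Fin.castLE hKD) id * Rᵀ) ∧
      Gs = Q.submatrix id (Fin.castLE hKD) * T⁻¹ := by
  set U := Q.submatrix id (Fin.castLE hKD)
  set S := Sig.submatrix (Fin.castLE hKD) id * Rᵀ
  have hSig2 := mul_transpose_eq_diagonal_of_rectDiag hSig hzero
  have hYY : Y * Yᵀ = Q * diagonal (fun i : Fin D => s i ^ 2) * Qᵀ := by
    rw [hY, mul_transpose_mul_transpose_of_orthogonal hR, transpose_mul, ← hSig2]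
    simp only [Matrix.mul_assoc]
  have hcand : ∀ b ≤ K, U * truncId K b * S = Q * truncId D b * Qᵀ * Y := fun b hb => by
    rw [← Matrix.mul_assoc, submatrix_castLE_mul_truncId_mul hKD hb, hY]
    simp only [Matrix.mul_assoc]
    rw [← Matrix.mul_assoc Qᵀ, hQ, Matrix.one_mul]
  have hSS : IsUnit (S * Sᵀ) := by
    rw [mul_transpose_mul_transpose_of_orthogonal hR, transpose_submatrix,
      ← submatrix_mul _ _ _ _ _ Function.bijective_id, hSig2,
      submatrix_diagonal _ _ (Fin.castLE_injective hKD)]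
    exact isUnit_diagonal_of_ne_zero fun k =>
      ((sq_nonneg _).trans_lt
        (singularValue_sq_lt_of_mem hsnn hmono hstrict (mem_truncSet.2 k.isLt) le_rfl)).ne'
  exact exists_commTruncInv_of_mul_truncId_mul_eq hK
    (transpose_mul_submatrix_eq_one hQ (Fin.castLE_injective hKD)) hSS fun b =>
      (mul_truncId_mul_eq_of_ndCost_le hKD hQ hYY hsnn hmono hstrict hp hcand (hmin S U) b).trans
        (hcand _ b.isLt).symm

/-- Given an SVD `Y = Q Σ Rᵀ` with decreasing nonnegative singular values `s 0 ≥ s 1 ≥ …`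
(0-based; `s i = 0` for `i ≥ min D N`) whose top `K+1` values are strictly separated,
every global minimizer of the nested dropout cost has the form
`X* = T Σ_K Rᵀ`, `Γ* = Q_K T⁻¹` for some `T` commutative in its truncation and
inversion. -/
theorem nd_minimizer_form
    {D N K : ℕ} (hK : 1 ≤ K) (hKD : K ≤ D) (hKN : K ≤ N)
    (Y : Matrix (Fin D) (Fin N) ℝ)
    (Q : Matrix (Fin D) (Fin D) ℝ) (R : Matrix (Fin N) (Fin N) ℝ)
    (hQ : Qᵀ * Q = 1) (hR : Rᵀ * R = 1)
    (s : ℕ → ℝ) (Sig : Matrix (Fin D) (Fin N) ℝ)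
    (hSig : ∀ (i : Fin D) (j : Fin N), Sig i j = if (i : ℕ) = (j : ℕ) then s (i : ℕ) else 0)
    (hsnn : ∀ i, 0 ≤ s i)
    (hmono : ∀ i, s (i + 1) ≤ s i)
    (hzero : ∀ i, min D N ≤ i → s i = 0)
    (hstrict : ∀ i, i < K → s (i + 1) < s i)
    (hY : Y = Q * Sig * Rᵀ)
    (p : Fin K → ℝ) (hp : ∀ b, 0 < p b) (hsum : ∑ b, p b = 1)
    (Xs : Matrix (Fin K) (Fin N) ℝ) (Gs : Matrix (Fin D) (Fin K) ℝ)
    (hmin : ∀ (X : Matrix (Fin K) (Fin N) ℝ) (G : Matrix (Fin D) (Fin K) ℝ),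
      ndCost Y p Xs Gs ≤ ndCost Y p X G) :
    ∃ T : Matrix (Fin K) (Fin K) ℝ, CommTruncInv T ∧
      Xs = T * (Sig.submatrix (Fin.castLE hKD) id * Rᵀ) ∧
      Gs = Q.submatrix id (Fin.castLE hKD) * T⁻¹ :=
  nd_minimizer_form_general hK hKD Y Q R hQ hR s Sig hSig hsnn hmono hzero hstrict hY p hp Xs Gs
    hmin
end

section
/- Let T ∈ ℝ^{K×K} be orthogonal (TᵀT = I_K) and suppose that every leading principal minor T^{(b)}, b ∈ {1,…,K}, is also orthogonal. Then T is a diagonal matrix and every diagonal entry of T equals +1 or −1. -/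
open Matrix BigOperators

/-- If `T` is orthogonal and all of its leading principal minors are orthogonal,
then `T` is diagonal with diagonal entries `±1`. -/
theorem orth_minors_imp_sign_diagonal
    {K : ℕ} (T : Matrix (Fin K) (Fin K) ℝ)
    (horth : Tᵀ * T = 1)
    (hminors : ∀ (b : ℕ) (h : b ≤ K), 1 ≤ b →
      (leadMinor T b h)ᵀ * leadMinor T b h = 1) :
    (∀ i j : Fin K, i ≠ j → T i j = 0) ∧
    (∀ i : Fin K, T i i = 1 ∨ T i i = -1) := by
  -- column norms
  have hnorm : ∀ j : Fin K, ∑ i : Fin K, T i j * T i j = 1 := by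
    intro j
    have := congrFun (congrFun horth j) j
    simpa [Matrix.mul_apply, Matrix.transpose_apply, Matrix.one_apply] using this
  -- column orthogonality
  have hortho : ∀ j k : Fin K, j ≠ k → ∑ i : Fin K, T i j * T i k = 0 := by
    intro j k hjk
    have := congrFun (congrFun horth j) k
    simpa [Matrix.mul_apply, Matrix.transpose_apply, Matrix.one_apply, hjk] using this
  -- zeros below the diagonal
  have key1 : ∀ j i : Fin K, j < i → T i j = 0 := by
    intro j i hij
    set b : ℕ := (j : ℕ) + 1 with hb
    have hbK : b ≤ K := j.isLt
    have hmin := hminors b hbK (Nat.le_add_left 1 _)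
    set j' : Fin b := ⟨(j : ℕ), Nat.lt_succ_self _⟩ with hj'
    have hcast : Fin.castLE hbK j' = j := by ext; rfl
    have hmnorm : ∑ i' : Fin b, T (Fin.castLE hbK i') j * T (Fin.castLE hbK i') j = 1 := by
      have := congrFun (congrFun hmin j') j'
      simpa [leadMinor, Matrix.mul_apply, Matrix.transpose_apply, Matrix.one_apply,
        Matrix.submatrix_apply, hcast] using this
    -- sum over the embedded set
    have hmap : ∑ i ∈ Finset.univ.map (Fin.castLEEmb hbK), T i j * T i j = 1 := by
      rw [Finset.sum_map]
      simpa using hmnorm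
    have hcompl : ∑ i ∈ (Finset.univ.map (Fin.castLEEmb hbK))ᶜ, T i j * T i j = 0 := by
      have := Finset.sum_add_sum_compl (Finset.univ.map (Fin.castLEEmb hbK))
        (fun i => T i j * T i j)
      rw [hnorm j] at this
      linarith [hmap, this]
    have hmem : i ∈ (Finset.univ.map (Fin.castLEEmb hbK))ᶜ := by
      simp only [Finset.mem_compl, Finset.mem_map, Finset.mem_univ, true_and, not_exists]
      intro i' hi'
      have : (i : ℕ) < b := by
        rw [← hi']
        exact i'.isLt
      omega
    have hz := (Finset.sum_eq_zero_iff_of_nonneg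
      (fun i _ => mul_self_nonneg (T i j))).mp hcompl i hmem
    nlinarith [hz]
  -- main simultaneous induction
  have Q : ∀ n : ℕ, ∀ k : Fin K, (k : ℕ) = n →
      (∀ j : Fin K, j ≠ k → T k j = 0) ∧ (T k k = 1 ∨ T k k = -1) := by
    intro n
    induction n using Nat.strong_induction_on with
    | _ n ih =>
      intro k hk
      -- column k has zeros off the diagonal
      have hcol : ∀ i : Fin K, i ≠ k → T i k = 0 := by
        intro i hik
        rcases lt_or_gt_of_ne hik with hlt | hgt
        · exact ((ih (i : ℕ) (by omega) i rfl).1 k (fun h => hik h.symm))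
        · exact key1 k i hgt
      have hsum : ∑ i : Fin K, T i k * T i k = T k k * T k k := by
        rw [Finset.sum_eq_single k]
        · intro i _ hik
          rw [hcol i hik]; ring
        · intro h; exact absurd (Finset.mem_univ k) h
      have hsq : T k k * T k k = 1 := by rw [← hsum]; exact hnorm k
      have hTkk : T k k = 1 ∨ T k k = -1 := by
        rcases mul_eq_zero.mp (show (T k k - 1) * (T k k + 1) = 0 by nlinarith) with h | h
        · left; linarith
        · right; linarith
      have hTkk0 : T k k ≠ 0 := by rcases hTkk with h | h <;> rw [h] <;> norm_num
      refine ⟨?_, hTkk⟩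
      intro j hjk
      rcases lt_or_gt_of_ne hjk with hlt | hgt
      · -- j < k : T k j = 0 below diagonal
        exact key1 j k hlt
      · -- j > k : use orthogonality of columns k and j
        have h0 := hortho k j (Ne.symm hjk)
        have hsum2 : ∑ i : Fin K, T i k * T i j = T k k * T k j := by
          rw [Finset.sum_eq_single k]
          · intro i _ hik
            rw [hcol i hik]; ring
          · intro h; exact absurd (Finset.mem_univ k) h
        rw [hsum2] at h0
        exact (mul_eq_zero.mp h0).resolve_left hTkk0
  constructor
  · intro i j hij
    exact (Q (i : ℕ) i rfl).1 j (fun h => hij h.symm)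
  · intro i
    exact (Q (i : ℕ) i rfl).2
end

section
/- Let Y ∈ ℝ^{D×N} with 1 ≤ K ≤ min(D,N), and suppose Y admits a singular value decomposition Y = Q Σ Rᵀ, where Q ∈ ℝ^{D×D} and R ∈ ℝ^{N×N} are orthogonal, Σ ∈ ℝ^{D×N} is rectangular-diagonal with singular values σ_1 ≥ σ_2 ≥ … ≥ 0 on its diagonal, and σ_1 > σ_2 > … > σ_K > σ_{K+1} ≥ 0 (with σ_{K+1} = 0 if K = min(D,N)). Let p be a probability mass function on {1,…,K} with p(b) > 0 for all b. Then the pair X = Σ_K Rᵀ, Γ = Q_K (where Σ_K ∈ ℝ^{K×N} is the first K rows of Σ and Q_K ∈ ℝ^{D×K} is the first K columns of Q) satisfies ΓᵀΓ = I_K and globally minimizes the nested dropout cost C(X,Γ) = Σ_{b=1}^{K} p(b)·‖Y − Γ^{(b)} X^{(b)}‖_F² over all X ∈ ℝ^{K×N} and all Γ ∈ ℝ^{D×K} with ΓᵀΓ = I_K. -/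
open Matrix BigOperators

namespace PCAND

noncomputable def frobSq {m n : ℕ} (A : Matrix (Fin m) (Fin n) ℝ) : ℝ := ∑ i, ∑ j, (A i j)^2

lemma frobSq_nonneg {m n : ℕ} (A : Matrix (Fin m) (Fin n) ℝ) : 0 ≤ frobSq A :=
  Finset.sum_nonneg fun _ _ => Finset.sum_nonneg fun _ _ => sq_nonneg _

lemma trace_eq {m n : ℕ} (A B : Matrix (Fin m) (Fin n) ℝ) :
    (Aᵀ * B).trace = ∑ i, ∑ j, A i j * B i j := by
  simp only [Matrix.trace, Matrix.diag, Matrix.mul_apply, Matrix.transpose_apply]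
  exact Finset.sum_comm

lemma frobSq_eq_trace {m n : ℕ} (A : Matrix (Fin m) (Fin n) ℝ) :
    frobSq A = (Aᵀ * A).trace := by
  rw [trace_eq]; simp [frobSq, sq]

lemma frobSq_orth_left {d m n : ℕ} (Q : Matrix (Fin d) (Fin m) ℝ) (hQ : Qᵀ * Q = 1)
    (A : Matrix (Fin m) (Fin n) ℝ) : frobSq (Q * A) = frobSq A := by
  rw [frobSq_eq_trace, frobSq_eq_trace, Matrix.transpose_mul, Matrix.mul_assoc,
    ← Matrix.mul_assoc Qᵀ Q A, hQ, Matrix.one_mul]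

lemma frobSq_orth_right {m n : ℕ} (R : Matrix (Fin n) (Fin n) ℝ) (hR : Rᵀ * R = 1)
    (A : Matrix (Fin m) (Fin n) ℝ) : frobSq (A * Rᵀ) = frobSq A := by
  rw [frobSq_eq_trace, frobSq_eq_trace, Matrix.transpose_mul, Matrix.transpose_transpose,
    Matrix.mul_assoc, Matrix.trace_mul_comm, Matrix.mul_assoc, Matrix.mul_assoc, hR,
    Matrix.mul_one]

lemma frob_sub_expand {m n : ℕ} (A B : Matrix (Fin m) (Fin n) ℝ) :
    frobSq (A - B) = frobSq A - 2*((Aᵀ*B).trace) + frobSq B := by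
  rw [trace_eq]
  have h : ∀ i j, (A i j - B i j)^2 = A i j^2 - 2*(A i j * B i j) + B i j ^2 := by
    intros; ring
  simp only [frobSq, Matrix.sub_apply, h, Finset.sum_add_distrib, Finset.sum_sub_distrib,
    Finset.mul_sum]

lemma sum_pick {n : ℕ} (c : ℕ) (f : Fin n → ℝ) :
    (∑ j : Fin n, if c = (j : ℕ) then f j else 0) = if h : c < n then f ⟨c, h⟩ else 0 := by
  split_ifs with h
  · rw [Finset.sum_eq_single (⟨c, h⟩ : Fin n)]
    · simp
    · intro j _ hj
      have : c ≠ (j : ℕ) := fun hc => hj (by apply Fin.ext; simp [← hc])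
      simp [this]
    · intro h'; exact absurd (Finset.mem_univ _) h'
  · apply Finset.sum_eq_zero; intro j _
    have : c ≠ (j : ℕ) := by have := j.isLt; omega
    simp [this]

noncomputable def mask (K b : ℕ) : Matrix (Fin K) (Fin K) ℝ :=
  Matrix.diagonal fun k => if (k : ℕ) < b then 1 else 0

lemma mask_transpose (K b : ℕ) : (mask K b)ᵀ = mask K b := Matrix.diagonal_transpose _

lemma mask_mul_mask (K b : ℕ) : mask K b * mask K b = mask K b := by
  rw [mask, Matrix.diagonal_mul_diagonal]
  refine congrArg Matrix.diagonal ?_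
  funext k; split_ifs <;> ring

lemma trunc_eq {D N K : ℕ} (Y : Matrix (Fin D) (Fin N) ℝ)
    (X : Matrix (Fin K) (Fin N) ℝ) (G : Matrix (Fin D) (Fin K) ℝ) (b : ℕ) :
    truncCost Y X G b = frobSq (Y - G * mask K b * X) := by
  unfold truncCost frobSq
  apply Finset.sum_congr rfl; intro i _; apply Finset.sum_congr rfl; intro j _
  have h1 : ∀ k, (G * mask K b) i k = G i k * (if (k:ℕ) < b then 1 else 0) := fun k =>
    Matrix.mul_diagonal ..
  have h : (G * mask K b * X) i j = ∑ k : Fin K, if (k:ℕ) < b then G i k * X k j else 0 := by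
    rw [Matrix.mul_apply]
    apply Finset.sum_congr rfl; intro k _
    rw [h1]; split_ifs <;> ring
  rw [Matrix.sub_apply, h]

lemma trace_mul_diagonal' {D : ℕ} (P : Matrix (Fin D) (Fin D) ℝ) (d : Fin D → ℝ) :
    (P * Matrix.diagonal d).trace = ∑ i, P i i * d i := by
  simp [Matrix.trace, Matrix.diag, Matrix.mul_diagonal]

lemma sum_indicator {D b : ℕ} (hb : b ≤ D) :
    (∑ i : Fin D, if (i:ℕ) < b then (1:ℝ) else 0) = b := by
  rw [Fin.sum_univ_eq_sum_range (fun i => if i < b then (1:ℝ) else 0)]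
  have hfil : Finset.filter (fun i => i < b) (Finset.range D) = Finset.range b := by
    ext x; simp; omega
  rw [← Finset.sum_filter, hfil, Finset.sum_const, Finset.card_range, nsmul_eq_mul, mul_one]

lemma weighted {D b : ℕ} (hbD : b ≤ D) (a : ℕ → ℝ) (hmono : ∀ i j, i ≤ j → a j ≤ a i)
    (w : Fin D → ℝ) (hw0 : ∀ i, 0 ≤ w i) (hw1 : ∀ i, w i ≤ 1)
    (hsum : ∑ i, w i = (b : ℝ)) :
    ∑ i : Fin D, w i * a i ≤ ∑ i : Fin D, (if (i:ℕ) < b then a i else 0) := by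
  have key : ∀ i : Fin D, w i * a i ≤
      (if (i:ℕ) < b then a i else 0) + a b * (w i - (if (i:ℕ) < b then 1 else 0)) := by
    intro i; by_cases h : (i:ℕ) < b
    · simp only [h, if_true]
      have h1 : a b ≤ a i := hmono (i:ℕ) b (le_of_lt h)
      nlinarith [hw1 i]
    · simp only [h, if_false]
      have h1 : a i ≤ a b := hmono b (i:ℕ) (le_of_not_gt h)
      nlinarith [hw0 i]
  calc ∑ i, w i * a i ≤ ∑ i : Fin D, ((if (i:ℕ) < b then a i else 0)
        + a b * (w i - (if (i:ℕ) < b then 1 else 0))) := Finset.sum_le_sum fun i _ => key i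
    _ = ∑ i : Fin D, (if (i:ℕ) < b then a i else 0)
        + a b * ((∑ i, w i) - ∑ i : Fin D, (if (i:ℕ) < b then (1:ℝ) else 0)) := by
        rw [Finset.sum_add_distrib]
        congr 1
        rw [← Finset.mul_sum, Finset.sum_sub_distrib]
    _ = ∑ i : Fin D, (if (i:ℕ) < b then a i else 0) := by
        rw [hsum, sum_indicator hbD]; ring

lemma idem_diag_le_one {D : ℕ} (P : Matrix (Fin D) (Fin D) ℝ) (hsymm : Pᵀ = P)
    (hid : P * P = P) (i : Fin D) (hnn : 0 ≤ P i i) : P i i ≤ 1 := by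
  have h1 : P i i = ∑ k, (P i k)^2 := by
    conv_lhs => rw [← hid]
    rw [Matrix.mul_apply]
    apply Finset.sum_congr rfl; intro k _
    have hk : P k i = P i k := by
      have := congrFun (congrFun hsymm i) k
      simpa using this
    rw [hk]; ring
  have h2 : (P i i)^2 ≤ ∑ k, (P i k)^2 :=
    Finset.single_le_sum (f := fun k => (P i k)^2) (fun k _ => sq_nonneg _) (Finset.mem_univ i)
  nlinarith [h1 ▸ h2]

lemma sig_diag {D N : ℕ} (s : ℕ → ℝ) (Sig : Matrix (Fin D) (Fin N) ℝ)
    (hSig : ∀ i j, Sig i j = if (i:ℕ) = (j:ℕ) then s (i:ℕ) else 0) :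
    Sig * Sigᵀ = Matrix.diagonal (fun i : Fin D => if (i:ℕ) < N then s (i:ℕ)^2 else 0) := by
  ext i i'
  rw [Matrix.mul_apply]
  simp only [Matrix.transpose_apply, hSig]
  by_cases hii : i = i'
  · subst hii
    have h : ∀ j : Fin N, (if (i:ℕ) = (j:ℕ) then s (i:ℕ) else 0) *
        (if (i:ℕ) = (j:ℕ) then s (i:ℕ) else 0)
        = if (i:ℕ) = (j:ℕ) then s (i:ℕ) * s (i:ℕ) else 0 := by
      intro j; split_ifs <;> ring
    rw [Finset.sum_congr rfl (fun j _ => h j), sum_pick]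
    rw [Matrix.diagonal_apply_eq]
    split_ifs <;> ring
  · have hne : (i:ℕ) ≠ (i':ℕ) := fun h => hii (Fin.ext h)
    rw [Matrix.diagonal_apply_ne _ hii]
    apply Finset.sum_eq_zero
    intro j _
    by_cases h1 : (i:ℕ) = (j:ℕ)
    · have h2 : (i':ℕ) ≠ (j:ℕ) := by omega
      simp [h2]
    · simp [h1]

lemma decomp {D N K : ℕ} (Y : Matrix (Fin D) (Fin N) ℝ) (G : Matrix (Fin D) (Fin K) ℝ)
    (hG : Gᵀ * G = 1) (X : Matrix (Fin K) (Fin N) ℝ) (b : ℕ) :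
    frobSq (Y - G * mask K b * X)
      = frobSq Y - frobSq ((G * mask K b)ᵀ * Y)
        + frobSq ((G * mask K b)ᵀ * Y - mask K b * X) := by
  set H := G * mask K b with hH
  have hHm : H * mask K b = H := by rw [hH, Matrix.mul_assoc, mask_mul_mask]
  have e1 : frobSq (Y - H * X) = frobSq Y - 2*((Yᵀ*(H*X)).trace) + frobSq (H*X) :=
    frob_sub_expand _ _
  have e2 : frobSq (Hᵀ*Y - mask K b * X)
      = frobSq (Hᵀ*Y) - 2*(((Hᵀ*Y)ᵀ*(mask K b * X)).trace) + frobSq (mask K b * X) :=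
    frob_sub_expand _ _
  have e3 : frobSq (H*X) = frobSq (mask K b * X) := by
    rw [hH, Matrix.mul_assoc]
    exact frobSq_orth_left G hG _
  have e4 : ((Hᵀ*Y)ᵀ*(mask K b * X)).trace = (Yᵀ*(H*X)).trace := by
    rw [Matrix.transpose_mul, Matrix.transpose_transpose, Matrix.mul_assoc]
    congr 1
    rw [← Matrix.mul_assoc H, hHm]
  rw [e1, e2, e3, e4]; ring

lemma proj_bound {D N K : ℕ} (hKD : K ≤ D) (b : ℕ) (hbK : b ≤ K)
    (Q : Matrix (Fin D) (Fin D) ℝ) (R : Matrix (Fin N) (Fin N) ℝ)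
    (hQ : Qᵀ * Q = 1) (hR : Rᵀ * R = 1)
    (s : ℕ → ℝ) (hsnn : ∀ i, 0 ≤ s i) (hmono : ∀ i, s (i+1) ≤ s i)
    (Sig : Matrix (Fin D) (Fin N) ℝ)
    (hSig : ∀ i j, Sig i j = if (i:ℕ) = (j:ℕ) then s (i:ℕ) else 0)
    (G : Matrix (Fin D) (Fin K) ℝ) (hG : Gᵀ * G = 1) :
    frobSq ((G * mask K b)ᵀ * (Q * Sig * Rᵀ))
      ≤ ∑ i : Fin D, (if (i:ℕ) < b then s (i:ℕ)^2 else 0) := by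
  set H := G * mask K b with hH
  have hQQ : Q * Qᵀ = 1 := mul_eq_one_comm.mp hQ
  set M := Qᵀ * H with hM
  have hHm : H * mask K b = H := by rw [hH, Matrix.mul_assoc, mask_mul_mask]
  have hHH : Hᵀ * H = mask K b := by
    rw [hH, Matrix.transpose_mul, mask_transpose, Matrix.mul_assoc,
      ← Matrix.mul_assoc Gᵀ G (mask K b), hG, Matrix.one_mul, mask_mul_mask]
  have hMM : Mᵀ * M = mask K b := by
    rw [hM, Matrix.transpose_mul, Matrix.transpose_transpose, Matrix.mul_assoc,
      ← Matrix.mul_assoc Q Qᵀ H, hQQ, Matrix.one_mul, hHH]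
  have hMm : M * mask K b = M := by rw [hM, Matrix.mul_assoc, hHm]
  have hmMt : mask K b * Mᵀ = Mᵀ := by
    have h := congrArg Matrix.transpose hMm
    rw [Matrix.transpose_mul, mask_transpose] at h
    exact h
  have hPP : (M * Mᵀ) * (M * Mᵀ) = M * Mᵀ := by
    rw [Matrix.mul_assoc, ← Matrix.mul_assoc Mᵀ M Mᵀ, hMM, hmMt]
  have hPsymm : (M * Mᵀ)ᵀ = M * Mᵀ := by
    rw [Matrix.transpose_mul, Matrix.transpose_transpose]
  have hw : ∀ i, (M * Mᵀ) i i = ∑ k, (M i k)^2 := by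
    intro i; rw [Matrix.mul_apply]
    apply Finset.sum_congr rfl; intro k _
    rw [Matrix.transpose_apply]; ring
  have hw0 : ∀ i, 0 ≤ (M * Mᵀ) i i := fun i =>
    (hw i) ▸ Finset.sum_nonneg fun k _ => sq_nonneg _
  have hw1 : ∀ i, (M * Mᵀ) i i ≤ 1 := fun i => idem_diag_le_one _ hPsymm hPP i (hw0 i)
  have hwsum : ∑ i, (M * Mᵀ) i i = (b : ℝ) := by
    have h1 : (∑ i, (M * Mᵀ) i i) = (M * Mᵀ).trace := rfl
    rw [h1, Matrix.trace_mul_comm, hMM, mask, Matrix.trace_diagonal]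
    exact sum_indicator hbK
  have e1 : frobSq (Hᵀ * (Q * Sig * Rᵀ)) = frobSq (Hᵀ * Q * Sig) := by
    rw [← Matrix.mul_assoc, ← Matrix.mul_assoc]
    exact frobSq_orth_right R hR _
  have e2 : Hᵀ * Q = Mᵀ := by
    conv_rhs => rw [hM, Matrix.transpose_mul, Matrix.transpose_transpose]
  have e3 : frobSq (Mᵀ * Sig) = ∑ i, (M * Mᵀ) i i * (if (i:ℕ) < N then s (i:ℕ)^2 else 0) := by
    rw [frobSq_eq_trace, Matrix.transpose_mul, Matrix.transpose_transpose,
      Matrix.trace_mul_comm]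
    have h5 : Mᵀ * Sig * (Sigᵀ * M) = Mᵀ * (Sig * Sigᵀ) * M := by
      simp only [Matrix.mul_assoc]
    rw [h5, Matrix.trace_mul_comm, ← Matrix.mul_assoc M Mᵀ (Sig * Sigᵀ),
      sig_diag s Sig hSig, trace_mul_diagonal']
  have smono : ∀ i j : ℕ, i ≤ j → s j ≤ s i := fun i j h =>
    antitone_nat_of_succ_le hmono h
  calc frobSq (Hᵀ * (Q * Sig * Rᵀ))
      = ∑ i, (M * Mᵀ) i i * (if (i:ℕ) < N then s (i:ℕ)^2 else 0) := by rw [e1, e2, e3]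
    _ ≤ ∑ i, (M * Mᵀ) i i * s (i:ℕ)^2 := Finset.sum_le_sum (fun i _ =>
        mul_le_mul_of_nonneg_left (by split_ifs; exacts [le_rfl, sq_nonneg _]) (hw0 i))
    _ ≤ ∑ i : Fin D, (if (i:ℕ) < b then s (i:ℕ)^2 else 0) := by
        refine weighted (hbK.trans hKD) (fun i => s i ^ 2)
          (fun i j hij => pow_le_pow_left₀ (hsnn j) (smono i j hij) 2) _ hw0 hw1 hwsum

lemma pca_mul {D N K : ℕ} (hKD : K ≤ D) (b : ℕ) (hbK : b ≤ K)
    (Q : Matrix (Fin D) (Fin D) ℝ)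
    (s : ℕ → ℝ) (Sig : Matrix (Fin D) (Fin N) ℝ)
    (hSig : ∀ i j, Sig i j = if (i:ℕ) = (j:ℕ) then s (i:ℕ) else 0) :
    Q.submatrix id (Fin.castLE hKD) * mask K b * (Sig.submatrix (Fin.castLE hKD) id)
      = Q * (Matrix.of fun (i : Fin D) (j : Fin N) =>
          if (i:ℕ) = (j:ℕ) ∧ (i:ℕ) < b then s (i:ℕ) else 0) := by
  ext i j
  rw [Matrix.mul_apply, Matrix.mul_apply]
  have hL : ∀ k : Fin K, (Q.submatrix id (Fin.castLE hKD) * mask K b) i k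
        * Sig.submatrix (Fin.castLE hKD) id k j
      = if (j:ℕ) = (k:ℕ) then
          Q i (Fin.castLE hKD k) * ((if (k:ℕ) < b then (1:ℝ) else 0) * s (k:ℕ)) else 0 := by
    intro k
    have hmd : (Q.submatrix id (Fin.castLE hKD) * mask K b) i k
        = Q i (Fin.castLE hKD k) * (if (k:ℕ) < b then (1:ℝ) else 0) := by
      rw [mask]; exact Matrix.mul_diagonal ..
    rw [hmd, Matrix.submatrix_apply, hSig]
    simp only [Fin.coe_castLE, id_eq]
    by_cases hkj : (k:ℕ) = (j:ℕ)
    · rw [if_pos hkj, if_pos hkj.symm, hkj]; ring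
    · have hjk : (j:ℕ) ≠ (k:ℕ) := fun h => hkj h.symm
      rw [if_neg hkj, if_neg hjk, mul_zero]
  have hR : ∀ d : Fin D, Q i d * (Matrix.of fun (i : Fin D) (j : Fin N) =>
          if (i:ℕ) = (j:ℕ) ∧ (i:ℕ) < b then s (i:ℕ) else 0) d j
      = if (j:ℕ) = (d:ℕ) then
          Q i d * ((if (d:ℕ) < b then (1:ℝ) else 0) * s (d:ℕ)) else 0 := by
    intro d
    simp only [Matrix.of_apply]
    by_cases hdj : (d:ℕ) = (j:ℕ)
    · rw [if_pos hdj.symm]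
      by_cases hdb : (d:ℕ) < b
      · rw [if_pos ⟨hdj, hdb⟩, if_pos hdb]; ring
      · rw [if_neg (fun hc => hdb hc.2), if_neg hdb]; ring
    · have hjd : (j:ℕ) ≠ (d:ℕ) := fun h => hdj h.symm
      rw [if_neg (fun hc => hdj hc.1), if_neg hjd, mul_zero]
  rw [Finset.sum_congr rfl (fun k _ => hL k), sum_pick,
      Finset.sum_congr rfl (fun d _ => hR d), sum_pick]
  by_cases h1 : (j:ℕ) < K
  · have h2 : (j:ℕ) < D := lt_of_lt_of_le h1 hKD
    rw [dif_pos h1, dif_pos h2]; rfl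
  · have h2 : ¬ (j:ℕ) < b := fun h => h1 (lt_of_lt_of_le h hbK)
    rw [dif_neg h1]
    split_ifs with h3
    · simp
    · rfl

lemma pca_value {D N K : ℕ} (hKD : K ≤ D) (hKN : K ≤ N) (b : ℕ) (hbK : b ≤ K)
    (Q : Matrix (Fin D) (Fin D) ℝ) (R : Matrix (Fin N) (Fin N) ℝ)
    (hQ : Qᵀ * Q = 1) (hR : Rᵀ * R = 1)
    (s : ℕ → ℝ) (Sig : Matrix (Fin D) (Fin N) ℝ)
    (hSig : ∀ i j, Sig i j = if (i:ℕ) = (j:ℕ) then s (i:ℕ) else 0) :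
    truncCost (Q*Sig*Rᵀ) (Sig.submatrix (Fin.castLE hKD) id * Rᵀ)
        (Q.submatrix id (Fin.castLE hKD)) b
      = frobSq (Q*Sig*Rᵀ) - ∑ i : Fin D, (if (i:ℕ) < b then s (i:ℕ)^2 else 0) := by
  rw [trunc_eq]
  set Sb : Matrix (Fin D) (Fin N) ℝ := Matrix.of fun (i : Fin D) (j : Fin N) =>
      if (i:ℕ) = (j:ℕ) ∧ (i:ℕ) < b then s (i:ℕ) else 0 with hSb
  have h1 : Q.submatrix id (Fin.castLE hKD) * mask K b
      * (Sig.submatrix (Fin.castLE hKD) id * Rᵀ) = Q * Sb * Rᵀ := by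
    rw [← Matrix.mul_assoc, pca_mul hKD b hbK Q s Sig hSig]
  rw [h1]
  have h2 : Q*Sig*Rᵀ - Q*Sb*Rᵀ = Q*(Sig - Sb)*Rᵀ := by
    rw [Matrix.mul_sub, Matrix.sub_mul]
  rw [h2, frobSq_orth_right R hR, frobSq_orth_left Q hQ,
    frobSq_orth_right R hR, frobSq_orth_left Q hQ]
  have hS : frobSq Sig = ∑ i : Fin D, (if (i:ℕ) < N then s (i:ℕ)^2 else 0) := by
    unfold frobSq
    refine Finset.sum_congr rfl (fun i _ => ?_)
    have h : ∀ j : Fin N, (Sig i j)^2 = if (i:ℕ) = (j:ℕ) then s (i:ℕ)^2 else 0 := fun j => by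
      rw [hSig]; split_ifs <;> simp
    rw [Finset.sum_congr rfl (fun j _ => h j), sum_pick]
    split_ifs with hh
    · rfl
    · rfl
  have hSb2 : frobSq (Sig - Sb)
      = ∑ i : Fin D, (if (i:ℕ) < N ∧ ¬ (i:ℕ) < b then s (i:ℕ)^2 else 0) := by
    unfold frobSq
    refine Finset.sum_congr rfl (fun i _ => ?_)
    have h : ∀ j : Fin N, ((Sig - Sb) i j)^2
        = if (i:ℕ) = (j:ℕ) then (if ¬ (i:ℕ) < b then s (i:ℕ)^2 else 0) else 0 := fun j => by
      rw [Matrix.sub_apply, hSig, hSb]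
      simp only [Matrix.of_apply]
      split_ifs <;> first | ring1 | (exfalso; omega)
    rw [Finset.sum_congr rfl (fun j _ => h j), sum_pick]
    split_ifs <;> first | rfl | (exfalso; omega)
  rw [hS, hSb2, ← Finset.sum_sub_distrib]
  refine Finset.sum_congr rfl (fun i _ => ?_)
  have hbN : b ≤ N := hbK.trans hKN
  have hiD := i.isLt
  split_ifs <;> first | ring1 | (exfalso; omega)

lemma lower_bound {D N K : ℕ} (hKD : K ≤ D) (b : ℕ) (hbK : b ≤ K)
    (Q : Matrix (Fin D) (Fin D) ℝ) (R : Matrix (Fin N) (Fin N) ℝ)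
    (hQ : Qᵀ * Q = 1) (hR : Rᵀ * R = 1)
    (s : ℕ → ℝ) (hsnn : ∀ i, 0 ≤ s i) (hmono : ∀ i, s (i+1) ≤ s i)
    (Sig : Matrix (Fin D) (Fin N) ℝ)
    (hSig : ∀ i j, Sig i j = if (i:ℕ) = (j:ℕ) then s (i:ℕ) else 0)
    (X : Matrix (Fin K) (Fin N) ℝ) (G : Matrix (Fin D) (Fin K) ℝ) (hG : Gᵀ * G = 1) :
    frobSq (Q*Sig*Rᵀ) - ∑ i : Fin D, (if (i:ℕ) < b then s (i:ℕ)^2 else 0)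
      ≤ truncCost (Q*Sig*Rᵀ) X G b := by
  rw [trunc_eq]
  have hd := decomp (Q*Sig*Rᵀ) G hG X b
  have hb2 := proj_bound hKD b hbK Q R hQ hR s hsnn hmono Sig hSig G hG
  have h0 := frobSq_nonneg ((G * mask K b)ᵀ * (Q*Sig*Rᵀ) - mask K b * X)
  rw [hd]
  linarith

end PCAND



/-- Given an SVD `Y = Q Σ Rᵀ` with decreasing nonnegative singular values (0-based
`s`, vanishing past `min D N`) whose top `K+1` values are strictly separated, the pair
`X = Σ_K Rᵀ`, `Γ = Q_K` satisfies `ΓᵀΓ = I` and globally minimizes the nested dropout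
cost over all `X` and all orthonormal `Γ`. -/
theorem pca_minimizes_nd_cost
    {D N K : ℕ} (hK : 1 ≤ K) (hKD : K ≤ D) (hKN : K ≤ N)
    (Y : Matrix (Fin D) (Fin N) ℝ)
    (Q : Matrix (Fin D) (Fin D) ℝ) (R : Matrix (Fin N) (Fin N) ℝ)
    (hQ : Qᵀ * Q = 1) (hR : Rᵀ * R = 1)
    (s : ℕ → ℝ) (Sig : Matrix (Fin D) (Fin N) ℝ)
    (hSig : ∀ (i : Fin D) (j : Fin N), Sig i j = if (i : ℕ) = (j : ℕ) then s (i : ℕ) else 0)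
    (hsnn : ∀ i, 0 ≤ s i)
    (hmono : ∀ i, s (i + 1) ≤ s i)
    (hzero : ∀ i, min D N ≤ i → s i = 0)
    (hstrict : ∀ i, i < K → s (i + 1) < s i)
    (hY : Y = Q * Sig * Rᵀ)
    (p : Fin K → ℝ) (hp : ∀ b, 0 < p b) (hsum : ∑ b, p b = 1) :
    (Q.submatrix id (Fin.castLE hKD))ᵀ * Q.submatrix id (Fin.castLE hKD) = 1 ∧
    ∀ (X : Matrix (Fin K) (Fin N) ℝ) (G : Matrix (Fin D) (Fin K) ℝ), Gᵀ * G = 1 →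
      ndCost Y p (Sig.submatrix (Fin.castLE hKD) id * Rᵀ)
        (Q.submatrix id (Fin.castLE hKD)) ≤ ndCost Y p X G := by
  subst hY
  constructor
  · ext k k'
    have h := congrFun (congrFun hQ (Fin.castLE hKD k)) (Fin.castLE hKD k')
    simp only [Matrix.mul_apply, Matrix.transpose_apply, Matrix.one_apply,
      Fin.castLE_inj] at h
    simp only [Matrix.mul_apply, Matrix.transpose_apply, Matrix.submatrix_apply,
      id_eq, Matrix.one_apply]
    exact h
  · intro X G hG
    unfold ndCost
    refine Finset.sum_le_sum (fun c _ => ?_)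
    have hbK : (c : ℕ) + 1 ≤ K := c.isLt
    rw [PCAND.pca_value hKD hKN ((c:ℕ)+1) hbK Q R hQ hR s Sig hSig]
    exact mul_le_mul_of_nonneg_left
      (PCAND.lower_bound hKD ((c:ℕ)+1) hbK Q R hQ hR s hsnn hmono Sig hSig X G hG) (hp c).le
end

section
/- Let Y ∈ ℝ^{D×N} with 1 ≤ K ≤ min(D,N), and suppose Y admits a singular value decomposition Y = Q Σ Rᵀ, where Q ∈ ℝ^{D×D} and R ∈ ℝ^{N×N} are orthogonal, Σ ∈ ℝ^{D×N} is rectangular-diagonal with singular values σ_1 ≥ σ_2 ≥ … ≥ 0 on its diagonal, and σ_1 > σ_2 > … > σ_K > σ_{K+1} ≥ 0 (with σ_{K+1} = 0 if K = min(D,N)). Let p be a probability mass function on {1,…,K} with p(b) > 0 for all b. Then every global minimizer (X*, Γ*) of the nested dropout cost C(X,Γ) = Σ_{b=1}^{K} p(b)·‖Y − Γ^{(b)} X^{(b)}‖_F² subject to the orthonormality constraint ΓᵀΓ = I_K satisfies X* = S Σ_K Rᵀ and Γ* = Q_K S for some diagonal matrix S ∈ ℝ^{K×K} with diagonal entries in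 {+1, −1}, where Σ_K ∈ ℝ^{K×N} is the first K rows of Σ and Q_K ∈ ℝ^{D×K} is the first K columns of Q. In particular, up to the signs of the code dimensions, the solution is unique and the columns of Γ* are exactly the K top eigenvectors of the covariance matrix YYᵀ ordered by decreasing eigenvalue magnitude, i.e., the constrained nested dropout autoencoder recovers PCA exactly. -/
open Matrix BigOperators Finset

lemma key_decomp {D N K : ℕ} (Y : Matrix (Fin D) (Fin N) ℝ) (X : Matrix (Fin K) (Fin N) ℝ)
    (G : Matrix (Fin D) (Fin K) ℝ)
    (hGo : ∀ k l : Fin K, (∑ i, G i k * G i l) = if k = l then 1 else 0)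
    (sb : Finset (Fin K)) :
    ∑ i, ∑ j, (Y i j - ∑ k ∈ sb, G i k * X k j)^2
      = (∑ k ∈ sb, ∑ j, (X k j - ∑ i, G i k * Y i j)^2) + (∑ i, ∑ j, (Y i j)^2)
        - ∑ k ∈ sb, ∑ j, (∑ i, G i k * Y i j)^2 := by
  have e1 : ∑ i, ∑ j, Y i j * (∑ k ∈ sb, G i k * X k j)
      = ∑ k ∈ sb, ∑ j, X k j * (∑ i, G i k * Y i j) := by
    calc ∑ i, ∑ j, Y i j * (∑ k ∈ sb, G i k * X k j)
        = ∑ i : Fin D, ∑ j : Fin N, ∑ k ∈ sb, G i k * Y i j * X k j := by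
          refine Finset.sum_congr rfl fun i _ => Finset.sum_congr rfl fun j _ => ?_
          rw [Finset.mul_sum]; exact Finset.sum_congr rfl fun k _ => by ring
      _ = ∑ j : Fin N, ∑ i : Fin D, ∑ k ∈ sb, G i k * Y i j * X k j := Finset.sum_comm
      _ = ∑ j : Fin N, ∑ k ∈ sb, ∑ i : Fin D, G i k * Y i j * X k j :=
          Finset.sum_congr rfl fun j _ => Finset.sum_comm
      _ = ∑ k ∈ sb, ∑ j : Fin N, ∑ i : Fin D, G i k * Y i j * X k j := Finset.sum_comm
      _ = ∑ k ∈ sb, ∑ j, X k j * (∑ i, G i k * Y i j) := by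
          refine Finset.sum_congr rfl fun k _ => Finset.sum_congr rfl fun j _ => ?_
          rw [Finset.mul_sum]; exact Finset.sum_congr rfl fun i _ => by ring
  have e2 : ∑ i, ∑ j, (∑ k ∈ sb, G i k * X k j)^2 = ∑ k ∈ sb, ∑ j, (X k j)^2 := by
    have hcol : ∀ (j : Fin N) (k : Fin K), k ∈ sb →
        ∑ l ∈ sb, ∑ i : Fin D, G i k * G i l * (X k j * X l j) = (X k j)^2 := by
      intro j k hk
      have h3 : ∀ l ∈ sb, ∑ i : Fin D, G i k * G i l * (X k j * X l j)
          = (if k = l then X k j * X l j else 0) := by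
        intro l _
        have h4 : ∑ i : Fin D, G i k * G i l * (X k j * X l j)
            = (∑ i, G i k * G i l) * (X k j * X l j) := by rw [Finset.sum_mul]
        rw [h4, hGo k l]
        split <;> ring
      rw [Finset.sum_congr rfl h3, Finset.sum_ite_eq sb k (fun l => X k j * X l j)]
      simp [hk, sq]
    calc ∑ i, ∑ j, (∑ k ∈ sb, G i k * X k j)^2
        = ∑ i : Fin D, ∑ j : Fin N, ∑ k ∈ sb, ∑ l ∈ sb, G i k * G i l * (X k j * X l j) := by
          refine Finset.sum_congr rfl fun i _ => Finset.sum_congr rfl fun j _ => ?_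
          rw [sq, Finset.sum_mul_sum]
          exact Finset.sum_congr rfl fun k _ => Finset.sum_congr rfl fun l _ => by ring
      _ = ∑ j : Fin N, ∑ i : Fin D, ∑ k ∈ sb, ∑ l ∈ sb, G i k * G i l * (X k j * X l j) :=
          Finset.sum_comm
      _ = ∑ j : Fin N, ∑ k ∈ sb, ∑ i : Fin D, ∑ l ∈ sb, G i k * G i l * (X k j * X l j) :=
          Finset.sum_congr rfl fun j _ => Finset.sum_comm
      _ = ∑ j : Fin N, ∑ k ∈ sb, ∑ l ∈ sb, ∑ i : Fin D, G i k * G i l * (X k j * X l j) :=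
          Finset.sum_congr rfl fun j _ => Finset.sum_congr rfl fun k _ => Finset.sum_comm
      _ = ∑ j : Fin N, ∑ k ∈ sb, (X k j)^2 :=
          Finset.sum_congr rfl fun j _ => Finset.sum_congr rfl fun k hk => hcol j k hk
      _ = ∑ k ∈ sb, ∑ j, (X k j)^2 := Finset.sum_comm
  have lhs : ∑ i, ∑ j, (Y i j - ∑ k ∈ sb, G i k * X k j)^2
      = (∑ i, ∑ j, (Y i j)^2) - 2 * (∑ i, ∑ j, Y i j * (∑ k ∈ sb, G i k * X k j))
        + ∑ i, ∑ j, (∑ k ∈ sb, G i k * X k j)^2 := by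
    have h0 : ∀ (i : Fin D) (j : Fin N), (Y i j - ∑ k ∈ sb, G i k * X k j)^2
        = (Y i j)^2 - 2 * (Y i j * ∑ k ∈ sb, G i k * X k j) + (∑ k ∈ sb, G i k * X k j)^2 := by
      intro i j; ring
    simp only [h0, Finset.sum_add_distrib, Finset.sum_sub_distrib, ← Finset.mul_sum]
  have rhs : ∀ k : Fin K, ∑ j, (X k j - ∑ i, G i k * Y i j)^2
      = (∑ j, (X k j)^2) - 2 * (∑ j, X k j * (∑ i, G i k * Y i j))
        + ∑ j, (∑ i, G i k * Y i j)^2 := by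
    intro k
    have h0 : ∀ j : Fin N, (X k j - ∑ i, G i k * Y i j)^2
        = (X k j)^2 - 2 * (X k j * ∑ i, G i k * Y i j) + (∑ i, G i k * Y i j)^2 := by
      intro j; ring
    simp only [h0, Finset.sum_add_distrib, Finset.sum_sub_distrib, ← Finset.mul_sum]
  rw [lhs, e1, e2]
  simp only [rhs, Finset.sum_add_distrib, Finset.sum_sub_distrib, ← Finset.mul_sum]
  ring

lemma sum_fin_filter {n m : ℕ} (h : m ≤ n) (f : ℕ → ℝ) :
    ∑ k ∈ Finset.filter (fun k : Fin n => (k : ℕ) < m) Finset.univ, f (k : ℕ)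
      = ∑ j ∈ Finset.range m, f j := by
  rw [Finset.sum_filter]
  rw [Fin.sum_univ_eq_sum_range (fun j => if j < m then f j else 0) n]
  rw [← Finset.sum_filter]
  congr 1
  ext j
  simp only [Finset.mem_filter, Finset.mem_range]
  omega

lemma kyfan {D : ℕ} (t : ℕ) (ht : t + 1 ≤ D) (lam : ℕ → ℝ)
    (hmono : ∀ n m : ℕ, n ≤ m → lam m ≤ lam n)
    (r : Fin D → ℝ) (hr0 : ∀ i, 0 ≤ r i) (hr1 : ∀ i, r i ≤ 1)
    (hrs : ∑ i, r i = ((t : ℝ) + 1)) :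
    (∑ i : Fin D, lam (i : ℕ) * r i)
      + (lam t - lam (t + 1)) * (∑ i ∈ Finset.filter (fun i : Fin D => ¬ (i : ℕ) < t + 1) Finset.univ, r i)
      ≤ ∑ i ∈ Finset.filter (fun i : Fin D => (i : ℕ) < t + 1) Finset.univ, lam (i : ℕ) := by
  classical
  have hsplit : (∑ i : Fin D, lam (i : ℕ) * r i)
      = (∑ i ∈ Finset.filter (fun i : Fin D => (i : ℕ) < t + 1) Finset.univ, lam (i : ℕ) * r i)
        + ∑ i ∈ Finset.filter (fun i : Fin D => ¬ (i : ℕ) < t + 1) Finset.univ, lam (i : ℕ) * r i :=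
    (Finset.sum_filter_add_sum_filter_not Finset.univ _ _).symm
  have hone : ∑ i ∈ Finset.filter (fun i : Fin D => (i : ℕ) < t + 1) Finset.univ, (1 : ℝ)
      = (t : ℝ) + 1 := by
    have := sum_fin_filter (n := D) (m := t + 1) ht (fun _ => (1 : ℝ))
    simpa using this
  have hsplit2 : (∑ i ∈ Finset.filter (fun i : Fin D => (i : ℕ) < t + 1) Finset.univ, r i)
      + (∑ i ∈ Finset.filter (fun i : Fin D => ¬ (i : ℕ) < t + 1) Finset.univ, r i) = (t : ℝ) + 1 := by
    rw [Finset.sum_filter_add_sum_filter_not]; exact hrs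
  have h1 : (∑ i ∈ Finset.filter (fun i : Fin D => (i : ℕ) < t + 1) Finset.univ, lam (i : ℕ) * r i)
      + lam t * (∑ i ∈ Finset.filter (fun i : Fin D => (i : ℕ) < t + 1) Finset.univ, (1 - r i))
      ≤ ∑ i ∈ Finset.filter (fun i : Fin D => (i : ℕ) < t + 1) Finset.univ, lam (i : ℕ) := by
    rw [Finset.mul_sum, ← Finset.sum_add_distrib]
    apply Finset.sum_le_sum
    intro i hi'
    have hit : (i : ℕ) ≤ t := by
      simp only [Finset.mem_filter, Finset.mem_univ, true_and] at hi'; omega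
    nlinarith [hr1 i, hmono (i : ℕ) t hit]
  have hlo1 : (∑ i ∈ Finset.filter (fun i : Fin D => (i : ℕ) < t + 1) Finset.univ, (1 - r i))
      = ∑ i ∈ Finset.filter (fun i : Fin D => ¬ (i : ℕ) < t + 1) Finset.univ, r i := by
    rw [Finset.sum_sub_distrib, hone]; linarith [hsplit2]
  have h2 : (∑ i ∈ Finset.filter (fun i : Fin D => ¬ (i : ℕ) < t + 1) Finset.univ, lam (i : ℕ) * r i)
      ≤ lam (t + 1) * ∑ i ∈ Finset.filter (fun i : Fin D => ¬ (i : ℕ) < t + 1) Finset.univ, r i := by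
    rw [Finset.mul_sum]
    apply Finset.sum_le_sum
    intro i hi'
    have hit : t + 1 ≤ (i : ℕ) := by
      simp only [Finset.mem_filter, Finset.mem_univ, true_and] at hi'; omega
    nlinarith [hr0 i, hmono (t + 1) (i : ℕ) hit]
  rw [hlo1] at h1
  linarith [hsplit, h1, h2]

lemma row_bound {D K : ℕ} (B : Matrix (Fin D) (Fin K) ℝ) (hBtB : Bᵀ * B = 1) (i : Fin D) :
    ∑ k, B i k * B i k ≤ 1 := by
  classical
  set P : Matrix (Fin D) (Fin D) ℝ := B * Bᵀ with hP
  have hPP : P * P = P := by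
    rw [hP, Matrix.mul_assoc, ← Matrix.mul_assoc Bᵀ B Bᵀ, hBtB, Matrix.one_mul]
  have hPsymm : ∀ a b : Fin D, P a b = P b a := by
    intro a b
    simp only [hP, Matrix.mul_apply, Matrix.transpose_apply]
    exact Finset.sum_congr rfl fun k _ => mul_comm _ _
  have hPii : P i i = ∑ k, B i k * B i k := by
    simp only [hP, Matrix.mul_apply, Matrix.transpose_apply]
  have hPsq : P i i = ∑ j, P i j * P i j := by
    conv_lhs => rw [← hPP]
    rw [Matrix.mul_apply]
    exact Finset.sum_congr rfl fun j _ => by rw [hPsymm j i]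
  have hge : P i i * P i i ≤ ∑ j, P i j * P i j :=
    Finset.single_le_sum (f := fun j => P i j * P i j)
      (fun j _ => mul_self_nonneg _) (Finset.mem_univ i)
  nlinarith [hge, hPii, hPsq, mul_self_nonneg (P i i)]

lemma per_b {D K : ℕ} (t : ℕ) (htK : t < K) (hKD : K ≤ D) (s : ℕ → ℝ)
    (hsnn : ∀ n, 0 ≤ s n) (smono : ∀ n m : ℕ, n ≤ m → s m ≤ s n)
    (B : Matrix (Fin D) (Fin K) ℝ)
    (hcol : ∀ k, ∑ i, B i k * B i k = 1)
    (hrow : ∀ i, ∑ k, B i k * B i k ≤ 1) :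
    (∑ k ∈ Finset.filter (fun k : Fin K => (k : ℕ) < t + 1) Finset.univ,
        ∑ i : Fin D, s (i : ℕ) ^ 2 * (B i k * B i k))
      + (s t ^ 2 - s (t + 1) ^ 2) *
        (∑ i ∈ Finset.filter (fun i : Fin D => ¬ (i : ℕ) < t + 1) Finset.univ,
          ∑ k ∈ Finset.filter (fun k : Fin K => (k : ℕ) < t + 1) Finset.univ, B i k * B i k)
      ≤ ∑ k ∈ Finset.filter (fun k : Fin K => (k : ℕ) < t + 1) Finset.univ, s (k : ℕ) ^ 2 := by
  classical
  set r : Fin D → ℝ := fun i =>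
    ∑ k ∈ Finset.filter (fun k : Fin K => (k : ℕ) < t + 1) Finset.univ, B i k * B i k with hr
  have hr0 : ∀ i, 0 ≤ r i := fun i => Finset.sum_nonneg fun k _ => mul_self_nonneg _
  have hr1 : ∀ i, r i ≤ 1 := by
    intro i
    refine le_trans ?_ (hrow i)
    exact Finset.sum_le_sum_of_subset_of_nonneg (Finset.subset_univ _)
      (fun k _ _ => mul_self_nonneg _)
  have hrs : ∑ i, r i = ((t : ℝ) + 1) := by
    rw [hr]
    rw [Finset.sum_comm]
    have h1 : ∀ k : Fin K, (∑ i : Fin D, B i k * B i k) = 1 := hcol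
    rw [Finset.sum_congr rfl fun k _ => h1 k]
    have := sum_fin_filter (n := K) (m := t + 1) htK (fun _ => (1 : ℝ))
    rw [this]
    simp [Finset.sum_const]
  have hlam : ∀ n m : ℕ, n ≤ m → s m ^ 2 ≤ s n ^ 2 := by
    intro n m h
    have := smono n m h
    nlinarith [hsnn m, hsnn n]
  have hky := kyfan (D := D) t (le_trans htK hKD) (fun n => s n ^ 2) hlam r hr0 hr1 hrs
  have hswap : (∑ k ∈ Finset.filter (fun k : Fin K => (k : ℕ) < t + 1) Finset.univ,
      ∑ i : Fin D, s (i : ℕ) ^ 2 * (B i k * B i k)) = ∑ i : Fin D, s (i : ℕ) ^ 2 * r i := by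
    rw [Finset.sum_comm]
    exact Finset.sum_congr rfl fun i _ => by rw [hr, Finset.mul_sum]
  have hrhs : (∑ i ∈ Finset.filter (fun i : Fin D => (i : ℕ) < t + 1) Finset.univ, s (i : ℕ) ^ 2)
      = ∑ k ∈ Finset.filter (fun k : Fin K => (k : ℕ) < t + 1) Finset.univ, s (k : ℕ) ^ 2 := by
    rw [sum_fin_filter (n := D) (m := t + 1) (le_trans htK hKD) (fun n => s n ^ 2),
      sum_fin_filter (n := K) (m := t + 1) htK (fun n => s n ^ 2)]
  rw [hswap]
  rw [← hrhs]
  exact hky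

lemma trunc_formula {D N K : ℕ} (Y : Matrix (Fin D) (Fin N) ℝ) (X : Matrix (Fin K) (Fin N) ℝ)
    (G : Matrix (Fin D) (Fin K) ℝ)
    (hGo : ∀ k l : Fin K, (∑ i, G i k * G i l) = if k = l then 1 else 0) (b : ℕ) :
    truncCost Y X G b
      = (∑ k ∈ Finset.filter (fun k : Fin K => (k : ℕ) < b) Finset.univ,
          ∑ j, (X k j - ∑ i, G i k * Y i j) ^ 2)
        + (∑ i, ∑ j, (Y i j) ^ 2)
        - ∑ k ∈ Finset.filter (fun k : Fin K => (k : ℕ) < b) Finset.univ,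
            ∑ j, (∑ i, G i k * Y i j) ^ 2 := by
  have h0 : ∀ (i : Fin D) (j : Fin N),
      (∑ k : Fin K, if (k : ℕ) < b then G i k * X k j else 0)
        = ∑ k ∈ Finset.filter (fun k : Fin K => (k : ℕ) < b) Finset.univ, G i k * X k j :=
    fun i j => (Finset.sum_filter _ _).symm
  unfold truncCost
  simp only [h0]
  exact key_decomp Y X G hGo _

/-- Given an SVD `Y = Q Σ Rᵀ` with decreasing nonnegative singular values (0-based
`s`, vanishing past `min D N`) whose top `K+1` values are strictly separated, every
global minimizer `(X*, Γ*)` of the nested dropout cost subject to `Γᵀ Γ = I` is of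
the form `X* = S Σ_K Rᵀ`, `Γ* = Q_K S` for a diagonal sign matrix `S`; in particular
the columns of `Γ*` are the top `K` eigenvectors of `Y Yᵀ` (with eigenvalues `s k ^ 2`
in decreasing order), i.e. the constrained nested dropout autoencoder recovers PCA. -/
theorem nd_orthonormal_minimizer_is_pca
    {D N K : ℕ} (hK : 1 ≤ K) (hKD : K ≤ D) (hKN : K ≤ N)
    (Y : Matrix (Fin D) (Fin N) ℝ)
    (Q : Matrix (Fin D) (Fin D) ℝ) (R : Matrix (Fin N) (Fin N) ℝ)
    (hQ : Qᵀ * Q = 1) (hR : Rᵀ * R = 1)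
    (s : ℕ → ℝ) (Sig : Matrix (Fin D) (Fin N) ℝ)
    (hSig : ∀ (i : Fin D) (j : Fin N), Sig i j = if (i : ℕ) = (j : ℕ) then s (i : ℕ) else 0)
    (hsnn : ∀ i, 0 ≤ s i)
    (hmono : ∀ i, s (i + 1) ≤ s i)
    (hzero : ∀ i, min D N ≤ i → s i = 0)
    (hstrict : ∀ i, i < K → s (i + 1) < s i)
    (hY : Y = Q * Sig * Rᵀ)
    (p : Fin K → ℝ) (hp : ∀ b, 0 < p b) (hsum : ∑ b, p b = 1)
    (Xs : Matrix (Fin K) (Fin N) ℝ) (Gs : Matrix (Fin D) (Fin K) ℝ)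
    (hGs : Gsᵀ * Gs = 1)
    (hmin : ∀ (X : Matrix (Fin K) (Fin N) ℝ) (G : Matrix (Fin D) (Fin K) ℝ),
      Gᵀ * G = 1 → ndCost Y p Xs Gs ≤ ndCost Y p X G) :
    ∃ S : Matrix (Fin K) (Fin K) ℝ,
      (∀ i j : Fin K, i ≠ j → S i j = 0) ∧
      (∀ i : Fin K, S i i = 1 ∨ S i i = -1) ∧
      Xs = S * (Sig.submatrix (Fin.castLE hKD) id * Rᵀ) ∧
      Gs = Q.submatrix id (Fin.castLE hKD) * S ∧
      ∀ k : Fin K,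
        (Y * Yᵀ) *ᵥ (fun i => Gs i k) = (s (k : ℕ)) ^ 2 • fun i => Gs i k := by
  classical
  -- entrywise orthonormality facts
  have hQQT : Q * Qᵀ = 1 := mul_eq_one_comm.mp hQ
  have hQo : ∀ l m : Fin D, (∑ i, Q i l * Q i m) = if l = m then 1 else 0 := by
    intro l m
    have h := congrFun (congrFun hQ l) m
    simpa [Matrix.mul_apply, Matrix.transpose_apply, Matrix.one_apply] using h
  have hGso : ∀ k l : Fin K, (∑ i, Gs i k * Gs i l) = if k = l then 1 else 0 := by
    intro k l
    have h := congrFun (congrFun hGs k) l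
    simpa [Matrix.mul_apply, Matrix.transpose_apply, Matrix.one_apply] using h
  have smono : ∀ n m : ℕ, n ≤ m → s m ≤ s n := by
    intro n m h
    induction h with
    | refl => exact le_refl _
    | step h' ih => exact le_trans (hmono _) ih
  -- Sig * Sigᵀ is diagonal with entries s i ^ 2
  have hSigSig : Sig * Sigᵀ = Matrix.diagonal (fun i : Fin D => s (i : ℕ) ^ 2) := by
    ext i i'
    rw [Matrix.mul_apply]
    simp only [Matrix.transpose_apply, hSig]
    by_cases h : i = i'
    · subst h
      rw [Matrix.diagonal_apply_eq]
      by_cases hiN : (i : ℕ) < N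
      · rw [Finset.sum_eq_single (⟨(i : ℕ), hiN⟩ : Fin N)]
        · simp [sq]
        · intro j _ hj
          have : (i : ℕ) ≠ (j : ℕ) := by
            intro hc
            exact hj (Fin.ext (by simpa using hc.symm))
          rw [if_neg this]
          ring
        · intro h; exact absurd (Finset.mem_univ _) h
      · have hs0 : s (i : ℕ) = 0 :=
          hzero _ (le_trans (min_le_right D N) (not_lt.mp hiN))
        rw [Finset.sum_eq_zero, hs0]
        · ring
        · intro j _
          have : (i : ℕ) ≠ (j : ℕ) := by
            have := j.isLt; omega
          rw [if_neg this]; ring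
    · rw [Matrix.diagonal_apply_ne _ h]
      apply Finset.sum_eq_zero
      intro j _
      by_cases h1 : (i : ℕ) = (j : ℕ)
      · by_cases h2 : (i' : ℕ) = (j : ℕ)
        · exact absurd (Fin.ext (h1.trans h2.symm)) h
        · rw [if_neg h2]; ring
      · rw [if_neg h1]; ring
  have hYQ : Y = Q * (Sig * Rᵀ) := by rw [hY, Matrix.mul_assoc]
  have hQTY : Qᵀ * Y = Sig * Rᵀ := by
    rw [hYQ, ← Matrix.mul_assoc, hQ, Matrix.one_mul]
  have hWW : (Sig * Rᵀ) * (Sig * Rᵀ)ᵀ = Matrix.diagonal (fun i : Fin D => s (i : ℕ) ^ 2) := by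
    rw [Matrix.transpose_mul, Matrix.transpose_transpose, Matrix.mul_assoc,
      ← Matrix.mul_assoc Rᵀ R Sigᵀ, hR, Matrix.one_mul, hSigSig]
  have hYYT : Y * Yᵀ = Q * Matrix.diagonal (fun i : Fin D => s (i : ℕ) ^ 2) * Qᵀ := by
    rw [hYQ, Matrix.transpose_mul, Matrix.mul_assoc,
      ← Matrix.mul_assoc (Sig * Rᵀ) ((Sig * Rᵀ)ᵀ) Qᵀ, hWW, ← Matrix.mul_assoc]
  -- the PCA candidate
  have hG0o : ∀ k l : Fin K,
      (∑ i, (Q.submatrix id (Fin.castLE hKD)) i k * (Q.submatrix id (Fin.castLE hKD)) i l)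
        = if k = l then 1 else 0 := by
    intro k l
    simp only [Matrix.submatrix_apply, id]
    rw [hQo (Fin.castLE hKD k) (Fin.castLE hKD l)]
    by_cases h : k = l
    · simp [h]
    · rw [if_neg h, if_neg (fun hc => h (Fin.castLE_injective hKD hc))]
  have hG0 : (Q.submatrix id (Fin.castLE hKD))ᵀ * (Q.submatrix id (Fin.castLE hKD)) = 1 := by
    ext k l
    rw [Matrix.mul_apply]
    simp only [Matrix.transpose_apply]
    rw [hG0o k l]
    simp [Matrix.one_apply]
  have hM0 : ∀ (k : Fin K) (j : Fin N),
      (∑ i, Q.submatrix id (Fin.castLE hKD) i k * Y i j)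
        = (Sig.submatrix (Fin.castLE hKD) id * Rᵀ) k j := by
    intro k j
    have h1 : (∑ i, Q i (Fin.castLE hKD k) * Y i j) = (Qᵀ * Y) (Fin.castLE hKD k) j := by
      rw [Matrix.mul_apply]
      exact Finset.sum_congr rfl fun i _ => rfl
    calc (∑ i, Q.submatrix id (Fin.castLE hKD) i k * Y i j)
        = (Qᵀ * Y) (Fin.castLE hKD k) j := by
          simp only [Matrix.submatrix_apply, id]; exact h1
      _ = (Sig * Rᵀ) (Fin.castLE hKD k) j := by rw [hQTY]
      _ = (Sig.submatrix (Fin.castLE hKD) id * Rᵀ) k j := by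
          rw [Matrix.mul_apply, Matrix.mul_apply]
          exact Finset.sum_congr rfl fun m _ => by simp [Matrix.submatrix_apply]
  have hW0 : ∀ (k : Fin K) (j : Fin N),
      (Sig.submatrix (Fin.castLE hKD) id * Rᵀ) k j = (Sig * Rᵀ) (Fin.castLE hKD k) j := by
    intro k j
    rw [Matrix.mul_apply, Matrix.mul_apply]
    exact Finset.sum_congr rfl fun m _ => by simp [Matrix.submatrix_apply]
  have hrho0 : ∀ k : Fin K,
      (∑ j, ((Sig.submatrix (Fin.castLE hKD) id * Rᵀ) k j) ^ 2) = s (k : ℕ) ^ 2 := by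
    intro k
    calc (∑ j, ((Sig.submatrix (Fin.castLE hKD) id * Rᵀ) k j) ^ 2)
        = ∑ j, (Sig * Rᵀ) (Fin.castLE hKD k) j * (Sig * Rᵀ) (Fin.castLE hKD k) j := by
          refine Finset.sum_congr rfl fun j _ => ?_
          rw [hW0 k j, sq]
      _ = ((Sig * Rᵀ) * (Sig * Rᵀ)ᵀ) (Fin.castLE hKD k) (Fin.castLE hKD k) := by
          rw [Matrix.mul_apply]
          exact Finset.sum_congr rfl fun j _ => rfl
      _ = s (k : ℕ) ^ 2 := by rw [hWW]; simp
  -- decompositions of the two costs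
  obtain ⟨E, hE⟩ : ∃ E : ℝ, E = ∑ i, ∑ j, (Y i j) ^ 2 := ⟨_, rfl⟩
  obtain ⟨Res, hResdef⟩ : ∃ f : Fin K → ℝ, f = fun b : Fin K =>
    ∑ k ∈ Finset.filter (fun k : Fin K => (k : ℕ) < (b : ℕ) + 1) Finset.univ,
      ∑ j, (Xs k j - ∑ i, Gs i k * Y i j) ^ 2 := ⟨_, rfl⟩
  obtain ⟨Phi, hPhidef⟩ : ∃ f : Fin K → ℝ, f = fun b : Fin K =>
    ∑ k ∈ Finset.filter (fun k : Fin K => (k : ℕ) < (b : ℕ) + 1) Finset.univ,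
      ∑ j, (∑ i, Gs i k * Y i j) ^ 2 := ⟨_, rfl⟩
  obtain ⟨Lam, hLamdef⟩ : ∃ f : Fin K → ℝ, f = fun b : Fin K =>
    ∑ k ∈ Finset.filter (fun k : Fin K => (k : ℕ) < (b : ℕ) + 1) Finset.univ,
      s (k : ℕ) ^ 2 := ⟨_, rfl⟩
  have hnds : ndCost Y p Xs Gs = ∑ b : Fin K, p b * (Res b + E - Phi b) := by
    simp only [hResdef, hPhidef, hE]
    unfold ndCost
    refine Finset.sum_congr rfl fun b _ => ?_
    rw [trunc_formula Y Xs Gs hGso ((b : ℕ) + 1)]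
  have hnd0 : ndCost Y p (Sig.submatrix (Fin.castLE hKD) id * Rᵀ) (Q.submatrix id (Fin.castLE hKD))
      = ∑ b : Fin K, p b * (E - Lam b) := by
    simp only [hLamdef, hE]
    unfold ndCost
    refine Finset.sum_congr rfl fun b _ => ?_
    rw [trunc_formula Y _ _ hG0o ((b : ℕ) + 1)]
    have hz : (∑ k ∈ Finset.filter (fun k : Fin K => (k : ℕ) < (b : ℕ) + 1) Finset.univ,
        ∑ j, ((Sig.submatrix (Fin.castLE hKD) id * Rᵀ) k j
          - ∑ i, Q.submatrix id (Fin.castLE hKD) i k * Y i j) ^ 2) = 0 := by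
      refine Finset.sum_eq_zero fun k _ => Finset.sum_eq_zero fun j _ => ?_
      rw [hM0 k j]; ring
    have hr : ∀ k ∈ Finset.filter (fun k : Fin K => (k : ℕ) < (b : ℕ) + 1) Finset.univ,
        (∑ j, (∑ i, Q.submatrix id (Fin.castLE hKD) i k * Y i j) ^ 2) = s (k : ℕ) ^ 2 := by
      intro k _
      calc (∑ j, (∑ i, Q.submatrix id (Fin.castLE hKD) i k * Y i j) ^ 2)
          = ∑ j, ((Sig.submatrix (Fin.castLE hKD) id * Rᵀ) k j) ^ 2 :=
            Finset.sum_congr rfl fun j _ => by rw [hM0 k j]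
        _ = s (k : ℕ) ^ 2 := hrho0 k
    rw [hz, Finset.sum_congr rfl hr]
    ring
  -- the rotated frame
  obtain ⟨B, hBdef⟩ : ∃ B : Matrix (Fin D) (Fin K) ℝ, B = Qᵀ * Gs := ⟨_, rfl⟩
  have hBtB : Bᵀ * B = 1 := by
    rw [hBdef, Matrix.transpose_mul, Matrix.transpose_transpose, Matrix.mul_assoc,
      ← Matrix.mul_assoc Q Qᵀ Gs, hQQT, Matrix.one_mul, hGs]
  have hBo : ∀ k l : Fin K, (∑ i, B i k * B i l) = if k = l then 1 else 0 := by
    intro k l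
    have h := congrFun (congrFun hBtB k) l
    simpa [Matrix.mul_apply, Matrix.transpose_apply, Matrix.one_apply] using h
  have hcolB : ∀ k, ∑ i, B i k * B i k = 1 := fun k => by rw [hBo k k]; simp
  have hrowB : ∀ i, ∑ k, B i k * B i k ≤ 1 := row_bound B hBtB
  have hGsQB : Gs = Q * B := by
    rw [hBdef, ← Matrix.mul_assoc, hQQT, Matrix.one_mul]
  have hBt : Bᵀ = Gsᵀ * Q := by
    rw [hBdef, Matrix.transpose_mul, Matrix.transpose_transpose]
  have hrho_c : ∀ k : Fin K,
      (∑ j, (∑ i, Gs i k * Y i j) ^ 2) = ∑ i : Fin D, s (i : ℕ) ^ 2 * (B i k * B i k) := by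
    intro k
    have hGsY : Gsᵀ * Y = Bᵀ * (Sig * Rᵀ) := by
      rw [hBt, Matrix.mul_assoc, ← hYQ]
    have hTT : (Bᵀ * (Sig * Rᵀ)) * (Bᵀ * (Sig * Rᵀ))ᵀ
        = Bᵀ * (Matrix.diagonal (fun i : Fin D => s (i : ℕ) ^ 2) * B) := by
      rw [Matrix.transpose_mul, Matrix.transpose_transpose, Matrix.mul_assoc,
        ← Matrix.mul_assoc (Sig * Rᵀ) ((Sig * Rᵀ)ᵀ) B, hWW]
    calc (∑ j, (∑ i, Gs i k * Y i j) ^ 2)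
        = ∑ j, (Gsᵀ * Y) k j * (Gsᵀ * Y) k j := by
          refine Finset.sum_congr rfl fun j _ => ?_
          rw [Matrix.mul_apply, sq]
          congr 1
      _ = ∑ j, (Bᵀ * (Sig * Rᵀ)) k j * (Bᵀ * (Sig * Rᵀ)) k j := by rw [hGsY]
      _ = ((Bᵀ * (Sig * Rᵀ)) * (Bᵀ * (Sig * Rᵀ))ᵀ) k k := by
          rw [Matrix.mul_apply]
          exact Finset.sum_congr rfl fun j _ => rfl
      _ = ∑ i : Fin D, s (i : ℕ) ^ 2 * (B i k * B i k) := by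
          rw [hTT, Matrix.mul_apply]
          refine Finset.sum_congr rfl fun i _ => ?_
          rw [Matrix.diagonal_mul]
          simp only [Matrix.transpose_apply]
          ring
  obtain ⟨dd, hdddef⟩ : ∃ f : Fin K → ℝ, f = fun b : Fin K =>
    ∑ i ∈ Finset.filter (fun i : Fin D => ¬ (i : ℕ) < (b : ℕ) + 1) Finset.univ,
      ∑ k ∈ Finset.filter (fun k : Fin K => (k : ℕ) < (b : ℕ) + 1) Finset.univ,
        B i k * B i k := ⟨_, rfl⟩
  have hper : ∀ b : Fin K, Phi b + (s (b : ℕ) ^ 2 - s ((b : ℕ) + 1) ^ 2) * dd b ≤ Lam b := by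
    intro b
    have hPhiB : Phi b = ∑ k ∈ Finset.filter (fun k : Fin K => (k : ℕ) < (b : ℕ) + 1) Finset.univ,
        ∑ i : Fin D, s (i : ℕ) ^ 2 * (B i k * B i k) := by
      simp only [hPhidef]
      exact Finset.sum_congr rfl fun k _ => hrho_c k
    rw [hPhiB]
    simp only [hdddef, hLamdef]
    exact per_b (b : ℕ) b.isLt hKD s hsnn smono B hcolB hrowB
  have hgap : ∀ b : Fin K, 0 < s (b : ℕ) ^ 2 - s ((b : ℕ) + 1) ^ 2 := by
    intro b
    have h1 := hstrict (b : ℕ) b.isLt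
    have h2 := hsnn ((b : ℕ) + 1)
    nlinarith
  have hdd_nn : ∀ b : Fin K, 0 ≤ dd b := by
    intro b
    simp only [hdddef]
    exact Finset.sum_nonneg fun i _ => Finset.sum_nonneg fun k _ => mul_self_nonneg _
  have hRes_nn : ∀ b : Fin K, 0 ≤ Res b := by
    intro b
    simp only [hResdef]
    exact Finset.sum_nonneg fun k _ => Finset.sum_nonneg fun j _ => sq_nonneg _
  have hLamPhi_nn : ∀ b : Fin K, 0 ≤ Lam b - Phi b := by
    intro b
    have h1 := hper b
    have h2 := mul_nonneg (hgap b).le (hdd_nn b)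
    linarith
  -- global optimality forces all slack to vanish
  have hle := hmin (Sig.submatrix (Fin.castLE hKD) id * Rᵀ) (Q.submatrix id (Fin.castLE hKD)) hG0
  rw [hnds, hnd0] at hle
  have h8 : ∑ b : Fin K, p b * (Res b + (Lam b - Phi b)) ≤ 0 := by
    have h := sub_nonpos.mpr hle
    rw [← Finset.sum_sub_distrib] at h
    calc ∑ b : Fin K, p b * (Res b + (Lam b - Phi b))
        = ∑ b : Fin K, (p b * (Res b + E - Phi b) - p b * (E - Lam b)) :=
          Finset.sum_congr rfl fun b _ => by ring
      _ ≤ 0 := h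
  have hterm_nn : ∀ b ∈ (Finset.univ : Finset (Fin K)),
      0 ≤ p b * (Res b + (Lam b - Phi b)) := fun b _ =>
    mul_nonneg (hp b).le (by linarith [hRes_nn b, hLamPhi_nn b])
  have hzero8 : ∑ b : Fin K, p b * (Res b + (Lam b - Phi b)) = 0 :=
    le_antisymm h8 (Finset.sum_nonneg hterm_nn)
  have hsum_zero : ∀ b : Fin K, Res b = 0 ∧ Lam b - Phi b = 0 := by
    intro b
    have h1 := (Finset.sum_eq_zero_iff_of_nonneg hterm_nn).mp hzero8 b (Finset.mem_univ b)
    have h2 : Res b + (Lam b - Phi b) = 0 := by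
      rcases mul_eq_zero.mp h1 with h | h
      · exact absurd h (ne_of_gt (hp b))
      · exact h
    constructor <;> linarith [hRes_nn b, hLamPhi_nn b]
  have hdd0 : ∀ b : Fin K, dd b = 0 := by
    intro b
    have h1 := hper b
    have h2 := (hsum_zero b).2
    have h3 : (s (b : ℕ) ^ 2 - s ((b : ℕ) + 1) ^ 2) * dd b ≤ 0 := by linarith
    have h4 : (s (b : ℕ) ^ 2 - s ((b : ℕ) + 1) ^ 2) * dd b = 0 :=
      le_antisymm h3 (mul_nonneg (hgap b).le (hdd_nn b))
    exact (mul_eq_zero.mp h4).resolve_left (ne_of_gt (hgap b))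
  -- B is upper triangular
  have hc0 : ∀ (i : Fin D) (k : Fin K), (k : ℕ) < (i : ℕ) → B i k = 0 := by
    intro i k hik
    have h1 := hdd0 k
    simp only [hdddef] at h1
    have hnn1 : ∀ x ∈ Finset.filter (fun i : Fin D => ¬ (i : ℕ) < (k : ℕ) + 1) Finset.univ,
        0 ≤ ∑ k' ∈ Finset.filter (fun k' : Fin K => (k' : ℕ) < (k : ℕ) + 1) Finset.univ,
          B x k' * B x k' :=
      fun x _ => Finset.sum_nonneg fun _ _ => mul_self_nonneg _
    have h2 := (Finset.sum_eq_zero_iff_of_nonneg hnn1).mp h1 i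
      (by simp only [Finset.mem_filter, Finset.mem_univ, true_and]; omega)
    have h3 := (Finset.sum_eq_zero_iff_of_nonneg
      (fun k' _ => mul_self_nonneg (B i k'))).mp h2 k
      (by simp only [Finset.mem_filter, Finset.mem_univ, true_and]; omega)
    exact mul_self_eq_zero.mp h3
  -- minimizer code is the encoding
  have hXsEq : ∀ (k : Fin K) (j : Fin N), Xs k j = ∑ i, Gs i k * Y i j := by
    intro k j
    have h1 := (hsum_zero ⟨K - 1, by omega⟩).1
    simp only [hResdef] at h1
    have h2 := (Finset.sum_eq_zero_iff_of_nonneg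
      (fun k' _ => Finset.sum_nonneg fun j' _ => sq_nonneg _)).mp h1 k
      (by simp only [Finset.mem_filter, Finset.mem_univ, true_and]
          have := k.isLt; omega)
    have h3 := (Finset.sum_eq_zero_iff_of_nonneg
      (fun j' _ => sq_nonneg _)).mp h2 j (Finset.mem_univ j)
    have h4 : Xs k j - ∑ i, Gs i k * Y i j = 0 := sq_eq_zero_iff.mp h3
    linarith [h4]
  -- the diagonal structure of B
  have hdiagB : ∀ n : ℕ, ∀ hn : n < K,
      (∀ i : Fin D, (i : ℕ) ≠ n → B i ⟨n, hn⟩ = 0) ∧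
      B ⟨n, lt_of_lt_of_le hn hKD⟩ ⟨n, hn⟩ * B ⟨n, lt_of_lt_of_le hn hKD⟩ ⟨n, hn⟩ = 1 := by
    intro n
    induction n using Nat.strong_induction_on with
    | _ n IH =>
      intro hn
      have hoff : ∀ i : Fin D, (i : ℕ) ≠ n → B i ⟨n, hn⟩ = 0 := by
        intro i hne
        rcases Nat.lt_or_ge (i : ℕ) n with hlt | hge
        · have hmK : (i : ℕ) < K := lt_trans hlt hn
          obtain ⟨hcolm, hdm⟩ := IH (i : ℕ) hlt hmK
          have hmn : (⟨(i : ℕ), hmK⟩ : Fin K) ≠ ⟨n, hn⟩ := by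
            intro hc
            exact (Nat.ne_of_lt hlt) (congrArg Fin.val hc)
          have horth := hBo ⟨(i : ℕ), hmK⟩ ⟨n, hn⟩
          rw [if_neg hmn] at horth
          have hiD : (⟨(i : ℕ), lt_of_lt_of_le hmK hKD⟩ : Fin D) = i := Fin.ext rfl
          have hcoll : (∑ i', B i' ⟨(i : ℕ), hmK⟩ * B i' ⟨n, hn⟩)
              = B i ⟨(i : ℕ), hmK⟩ * B i ⟨n, hn⟩ := by
            refine Finset.sum_eq_single i (fun i' _ hne' => ?_) (fun h => absurd (Finset.mem_univ i) h)
            rw [hcolm i' (fun hc => hne' (Fin.ext hc))]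
            ring
          rw [hcoll] at horth
          have hBim : B i ⟨(i : ℕ), hmK⟩ ≠ 0 := by
            intro h0
            rw [hiD] at hdm
            rw [h0] at hdm
            simp at hdm
          exact (mul_eq_zero.mp horth).resolve_left hBim
        · exact hc0 i ⟨n, hn⟩ (by simp only []; omega)
      refine ⟨hoff, ?_⟩
      have hnorm := hBo ⟨n, hn⟩ ⟨n, hn⟩
      rw [if_pos rfl] at hnorm
      have hcoll : (∑ i', B i' ⟨n, hn⟩ * B i' ⟨n, hn⟩)
          = B ⟨n, lt_of_lt_of_le hn hKD⟩ ⟨n, hn⟩ * B ⟨n, lt_of_lt_of_le hn hKD⟩ ⟨n, hn⟩ := by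
        refine Finset.sum_eq_single _ (fun i' _ hne' => ?_) (fun h => absurd (Finset.mem_univ _) h)
        rw [hoff i' (fun hc => hne' (Fin.ext hc))]
        ring
      rw [← hcoll]
      exact hnorm
  have hBoffv : ∀ (i : Fin D) (k : Fin K), (i : ℕ) ≠ (k : ℕ) → B i k = 0 := by
    intro i k h
    have h1 := (hdiagB (k : ℕ) k.isLt).1 i h
    have hk : (⟨(k : ℕ), k.isLt⟩ : Fin K) = k := Fin.ext rfl
    rw [hk] at h1
    exact h1
  have hGs_entry : ∀ (i : Fin D) (k : Fin K),
      Gs i k = Q i (Fin.castLE hKD k) * B (Fin.castLE hKD k) k := by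
    intro i k
    have h1 : Gs i k = ∑ i', Q i i' * B i' k := by rw [hGsQB, Matrix.mul_apply]
    rw [h1]
    rw [Finset.sum_eq_single (Fin.castLE hKD k) (fun i' _ hne => ?_)
      (fun h => absurd (Finset.mem_univ _) h)]
    have hval : (i' : ℕ) ≠ (k : ℕ) := fun hc => hne (Fin.ext (by simpa using hc))
    rw [hBoffv i' k hval]
    ring
  -- construct the sign matrix
  refine ⟨Matrix.of fun k l : Fin K => if k = l then B (Fin.castLE hKD k) k else 0, ?_, ?_, ?_, ?_, ?_⟩
  · intro i j hij
    simp [Matrix.of_apply, if_neg hij]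
  · intro k
    have h := (hdiagB (k : ℕ) k.isLt).2
    have hk : (⟨(k : ℕ), k.isLt⟩ : Fin K) = k := Fin.ext rfl
    have hkd : (⟨(k : ℕ), lt_of_lt_of_le k.isLt hKD⟩ : Fin D) = Fin.castLE hKD k := Fin.ext rfl
    rw [hk, hkd] at h
    have := mul_self_eq_one_iff.mp h
    simpa [Matrix.of_apply] using this
  · -- Xs = S * (Sig_K * Rᵀ)
    ext k j
    have hR1 : (Matrix.of (fun k l : Fin K => if k = l then B (Fin.castLE hKD k) k else 0)
        * (Sig.submatrix (Fin.castLE hKD) id * Rᵀ)) k j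
        = B (Fin.castLE hKD k) k * (Sig * Rᵀ) (Fin.castLE hKD k) j := by
      rw [Matrix.mul_apply]
      rw [Finset.sum_eq_single k (fun l _ hne => ?_) (fun h => absurd (Finset.mem_univ _) h)]
      · rw [Matrix.of_apply, if_pos rfl, hW0 k j]
      · rw [Matrix.of_apply, if_neg (Ne.symm hne)]
        ring
    rw [hR1, hXsEq k j]
    calc (∑ i, Gs i k * Y i j)
        = ∑ i, B (Fin.castLE hKD k) k * (Q i (Fin.castLE hKD k) * Y i j) := by
          refine Finset.sum_congr rfl fun i _ => ?_
          rw [hGs_entry i k]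
          ring
      _ = B (Fin.castLE hKD k) k * ∑ i, Q i (Fin.castLE hKD k) * Y i j :=
          (Finset.mul_sum _ _ _).symm
      _ = B (Fin.castLE hKD k) k * (Qᵀ * Y) (Fin.castLE hKD k) j := by
          rw [Matrix.mul_apply]
          simp [Matrix.transpose_apply]
      _ = B (Fin.castLE hKD k) k * (Sig * Rᵀ) (Fin.castLE hKD k) j := by rw [hQTY]
  · -- Gs = Q_K * S
    ext i k
    have hR1 : (Q.submatrix id (Fin.castLE hKD)
        * Matrix.of (fun k l : Fin K => if k = l then B (Fin.castLE hKD k) k else 0)) i k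
        = Q i (Fin.castLE hKD k) * B (Fin.castLE hKD k) k := by
      rw [Matrix.mul_apply]
      rw [Finset.sum_eq_single k (fun l _ hne => ?_) (fun h => absurd (Finset.mem_univ _) h)]
      · rw [Matrix.of_apply, if_pos rfl, Matrix.submatrix_apply, id]
      · rw [Matrix.of_apply, if_neg hne]
        ring
    rw [hR1]
    exact hGs_entry i k
  · -- eigenvector property
    intro k
    have hAQ : (Y * Yᵀ) * Q = Q * Matrix.diagonal (fun i : Fin D => s (i : ℕ) ^ 2) := by
      rw [hYYT, Matrix.mul_assoc (Q * Matrix.diagonal fun i : Fin D => s (i : ℕ) ^ 2) Qᵀ Q,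
        hQ, Matrix.mul_one]
    funext i
    simp only [Matrix.mulVec, dotProduct, Pi.smul_apply, smul_eq_mul]
    calc (∑ i', (Y * Yᵀ) i i' * Gs i' k)
        = ∑ i', ((Y * Yᵀ) i i' * Q i' (Fin.castLE hKD k)) * B (Fin.castLE hKD k) k := by
          refine Finset.sum_congr rfl fun i' _ => ?_
          rw [hGs_entry i' k]
          ring
      _ = (∑ i', (Y * Yᵀ) i i' * Q i' (Fin.castLE hKD k)) * B (Fin.castLE hKD k) k :=
          (Finset.sum_mul _ _ _).symm
      _ = ((Y * Yᵀ) * Q) i (Fin.castLE hKD k) * B (Fin.castLE hKD k) k := by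
          rw [Matrix.mul_apply]
      _ = (Q * Matrix.diagonal (fun i : Fin D => s (i : ℕ) ^ 2)) i (Fin.castLE hKD k)
            * B (Fin.castLE hKD k) k := by rw [hAQ]
      _ = s (k : ℕ) ^ 2 * Gs i k := by
          rw [Matrix.mul_diagonal, hGs_entry i k]
          simp only [Fin.coe_castLE]
          ring
end
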